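/- arXiv:2012.00108 — 8 statements merged into one kernel-verified Lean document; each statement's English description precedes it below -/
import Mathlib

section
/- For any element a of the strictly upper triangular matrices ut_n(F_q), any x ∈ F_q, and any pair of indices 1 ≤ s < t ≤ n, the group commutator [1 + x·e_{s,t}, 1 + a] in UT_n(F_q) equals 1 + x · Σ_{r ≤ s, u ≥ t, (r,u) ≠ (s,t)} ((1+a)^{-1})_{r,s} · (1+a)_{t,u} · e_{r,u}, where the sum is over pairs (r,u) with r ≤ s, u ≥ t, and (r,u) strictly above (s,t) in the order r ≤ s < t ≤ u with (r,u) ≠ (s,t). -/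
/-!
Write `g = 1 + a` and `E = x e_{s,t}`. As `s ≠ t`, `E² = 0`, so `(1 + E)⁻¹ = 1 - E`; as `g⁻¹` is
upper unitriangular, `E g⁻¹ E = x² (g⁻¹)_{t,s} e_{s,t} = 0`. Expanding, the commutator is
`1 + (g⁻¹ E g - E)`. The `(r,u)` entry of `g⁻¹ E g` is `x (g⁻¹)_{r,s} g_{t,u}`: it vanishes unless
`r ≤ s` and `t ≤ u`, and at `(s,t)` it equals `x`, cancelling `E`.
-/

open Matrix BigOperators

namespace Paper

variable (n : ℕ) (F : Type*) [Field F]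

/-- The strictly upper triangular matrices `ut_n(F)`. -/
def utset : Set (Matrix (Fin n) (Fin n) F) :=
  {a | ∀ i j : Fin n, ¬ i < j → a i j = 0}

/-- The unipotent upper triangular group `UT_n(F)` (as a set of matrices). -/
def UTset : Set (Matrix (Fin n) (Fin n) F) :=
  {g | (∀ i j : Fin n, j < i → g i j = 0) ∧ ∀ i : Fin n, g i i = 1}

/-- `N` is a normal subgroup of the group `UT_n(F)`. -/
def IsNormalSubgroupUT (N : Set (Matrix (Fin n) (Fin n) F)) : Prop :=
  N ⊆ UTset n F ∧ (1 : Matrix (Fin n) (Fin n) F) ∈ N ∧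
    (∀ a ∈ N, ∀ b ∈ N, a * b ∈ N) ∧
    (∀ a ∈ N, ∃ b ∈ N, a * b = 1 ∧ b * a = 1) ∧
    (∀ g ∈ UTset n F, ∀ g' : Matrix (Fin n) (Fin n) F, g * g' = 1 → g' * g = 1 →
      ∀ a ∈ N, g * a * g' ∈ N)

/-- The order `(i,j) ⪯ (r,s)` iff `r ≤ i` and `j ≤ s` on edges. -/
def edgeLe (p q : Fin n × Fin n) : Prop := q.1 ≤ p.1 ∧ p.2 ≤ q.2

/-- A set of increasing edges (a subset of `[[n]]`). -/
def IsEdgeSet (s : Set (Fin n × Fin n)) : Prop := ∀ p ∈ s, p.1 < p.2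

/-- The upper set of `[[n]]` generated by `lam`. -/
def upGen (lam : Set (Fin n × Fin n)) : Set (Fin n × Fin n) :=
  {q | q.1 < q.2 ∧ ∃ p ∈ lam, edgeLe n p q}

/-- `↑^ℓ lam`: elements at least `ℓ` in height above some element of `lam`. -/
def upNum (lam : Set (Fin n × Fin n)) (l : ℕ) : Set (Fin n × Fin n) :=
  {q | q.1 < q.2 ∧ ∃ p ∈ lam, edgeLe n p q ∧ ((p.2 : ℕ) - (p.1 : ℕ)) + l ≤ (q.2 : ℕ) - (q.1 : ℕ)}

/-- An upper set in the poset `[[n]]`. -/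
def IsUpperSetE (s : Set (Fin n × Fin n)) : Prop :=
  IsEdgeSet n s ∧ ∀ p ∈ s, ∀ q : Fin n × Fin n, q.1 < q.2 → edgeLe n p q → q ∈ s

/-- An antichain in the poset `[[n]]`. -/
def IsAntichainE (s : Set (Fin n × Fin n)) : Prop :=
  IsEdgeSet n s ∧ ∀ p ∈ s, ∀ q ∈ s, edgeLe n p q → p = q

/-- The set of minimal elements of `s`. -/
def minimalsE (s : Set (Fin n × Fin n)) : Set (Fin n × Fin n) :=
  {p | p ∈ s ∧ ∀ q ∈ s, edgeLe n q p → q = p}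

/-- A set partition of `[n]`: an antichain in both endpoint orders. -/
def IsSetPartitionE (s : Set (Fin n × Fin n)) : Prop :=
  IsEdgeSet n s ∧ (∀ p ∈ s, ∀ q ∈ s, p.1 = q.1 → p = q) ∧
    (∀ p ∈ s, ∀ q ∈ s, p.2 = q.2 → p = q)

/-- A nonnesting set partition of `[n]`. -/
def IsNNSP (s : Set (Fin n × Fin n)) : Prop :=
  IsSetPartitionE n s ∧ ∀ p ∈ s, ∀ q ∈ s, edgeLe n p q → p = q

/-- `nu` gives a splice `S = lam ⊔ nu` of the set partition `lam`. -/
def IsSplice (lam nu : Set (Fin n × Fin n)) : Prop :=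
  IsSetPartitionE n lam ∧ IsSetPartitionE n nu ∧ Disjoint lam nu ∧
  (∀ p ∈ nu, ∃ j : Fin n, p.1 < j ∧ j < p.2 ∧ ((p.1, j) ∈ lam ∨ (j, p.2) ∈ lam)) ∧
  (∀ j k : Fin n, j < k →
    ((∃ i, (i, k) ∈ nu ∧ (i, j) ∈ lam) ↔ (∃ l, (k, l) ∈ lam ∧ (j, l) ∈ nu)))

/-- A tight splice: `S ∩ ↑²lam = ∅`. -/
def IsTightSplice (lam nu : Set (Fin n × Fin n)) : Prop :=
  IsSplice n lam nu ∧ (lam ∪ nu) ∩ upNum n lam 2 = ∅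

/-- A binding `(i,j,k,l)` of the splice `lam ⊔ nu`. -/
def IsBinding (lam nu : Set (Fin n × Fin n)) (b : Fin n × Fin n × Fin n × Fin n) : Prop :=
  (b.1, b.2.1) ∈ lam ∧ (b.2.2.1, b.2.2.2) ∈ lam ∧ (b.1, b.2.2.1) ∈ nu ∧
    (b.2.1, b.2.2.2) ∈ nu ∧ b.2.1 < b.2.2.1

/-- Base relation generating the row equivalence on `nu`. -/
def rowRel (lam nu : Set (Fin n × Fin n)) (p q : Fin n × Fin n) : Prop :=
  ∃ b, IsBinding n lam nu b ∧
    ((p = (b.1, b.2.2.1) ∧ q = (b.2.1, b.2.2.2)) ∨ (q = (b.1, b.2.2.1) ∧ p = (b.2.1, b.2.2.2)))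

/-- Base relation generating the column equivalence on `lam`. -/
def colRel (lam nu : Set (Fin n × Fin n)) (p q : Fin n × Fin n) : Prop :=
  ∃ b, IsBinding n lam nu b ∧
    ((p = (b.1, b.2.1) ∧ q = (b.2.2.1, b.2.2.2)) ∨ (q = (b.1, b.2.1) ∧ p = (b.2.2.1, b.2.2.2)))

/-- The rows of the splice `lam ⊔ nu`. -/
def rowsOf (lam nu : Set (Fin n × Fin n)) : Set (Set (Fin n × Fin n)) :=
  {R | ∃ p ∈ nu, R = {q | q ∈ nu ∧ Relation.ReflTransGen (rowRel n lam nu) p q}}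

/-- The columns of the splice `lam ⊔ nu`. -/
def colsOf (lam nu : Set (Fin n × Fin n)) : Set (Set (Fin n × Fin n)) :=
  {C | ∃ p ∈ lam, C = {q | q ∈ lam ∧ Relation.ReflTransGen (colRel n lam nu) p q}}

/-- The set of bindings of the splice `lam ⊔ nu`. -/
def bindSet (lam nu : Set (Fin n × Fin n)) : Set (Fin n × Fin n × Fin n × Fin n) :=
  {b | IsBinding n lam nu b}

/-- Connectivity in the graph of `lam` on vertex set `[n]`. -/
def conn (lam : Set (Fin n × Fin n)) : Fin n → Fin n → Prop :=
  Relation.ReflTransGen (fun x y => (x, y) ∈ lam ∨ (y, x) ∈ lam)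

/-- `ut_F`: span of the matrix units indexed by `s`. -/
def utOf (s : Set (Fin n × Fin n)) : Submodule F (Matrix (Fin n) (Fin n) F) :=
  Submodule.span F {m | ∃ p ∈ s, m = Matrix.single p.1 p.2 (1 : F)}

/-- The support of a set of matrices. -/
def suppOf (N : Set (Matrix (Fin n) (Fin n) F)) : Set (Fin n × Fin n) :=
  {p | p.1 < p.2 ∧ ∃ a ∈ N, a p.1 p.2 ≠ 0}

/-- `[X, Y]`: the span of all brackets `a*b - b*a`, `a ∈ X`, `b ∈ Y`. -/
def brSpan (X Y : Set (Matrix (Fin n) (Fin n) F)) : Submodule F (Matrix (Fin n) (Fin n) F) :=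
  Submodule.span F {z | ∃ a ∈ X, ∃ b ∈ Y, z = a * b - b * a}


theorem _root_.one_sub_mul_mul_one_add_mul {R : Type*} [Ring R] {B g E : R} (hBg : B * g = 1)
    (hEBE : E * B * E = 0) :
    (1 - E) * B * (1 + E) * g = 1 + (B * E * g - E) := by
  calc (1 - E) * B * (1 + E) * g = B * g + B * E * g - E * (B * g) - E * B * E * g := by
        noncomm_ring
    _ = 1 + (B * E * g - E) := by rw [hBg, hEBE]; noncomm_ring

section

variable {ι R : Type*}

section

variable [Fintype ι] [DecidableEq ι]

theorem _root_.Matrix.inv_one_add_of_mul_self_eq_zero [CommRing R] {N : Matrix ι ι R}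
    (hN : N * N = 0) : (1 + N)⁻¹ = 1 - N :=
  inv_eq_right_inv <| by
    rw [mul_sub, mul_one, add_mul, one_mul, hN, add_zero, add_sub_cancel_right]

theorem _root_.Matrix.mul_single_mul_apply [Semiring R] (M N : Matrix ι ι R) (s t i j : ι)
    (c : R) :
    (M * single s t c * N) i j = M i s * c * N t j := by
  rw [mul_apply, Finset.sum_eq_single t (fun k _ hk => by simp [hk]) (by simp),
    mul_single_apply_same]

theorem _root_.Matrix.sum_sum_ite_smul_single_one [Semiring R] (p : ι → ι → Prop)
    [DecidableRel p] (f : ι → ι → R) :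
    ∑ r : ι, ∑ u : ι, (if p r u then f r u • single r u (1 : R) else 0) =
      of fun r u => if p r u then f r u else 0 := by
  rw [← sum_sum_single]
  refine Finset.sum_congr rfl fun r _ => Finset.sum_congr rfl fun u _ => ?_
  split_ifs <;> simp [smul_single]

end

section UpperTriangular

variable [LinearOrder ι]

theorem _root_.Matrix.isUpperTriangular_one_add [AddMonoidWithOne R] {a : Matrix ι ι R}
    (ha : ∀ i j, ¬ i < j → a i j = 0) : (1 + a).IsUpperTriangular :=
  fun i j (hji : j < i) => by
    rw [Matrix.add_apply, one_apply_ne hji.ne', ha i j (not_lt_of_gt hji), add_zero]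

theorem _root_.Matrix.one_add_apply_self [AddMonoidWithOne R] {a : Matrix ι ι R}
    (ha : ∀ i j, ¬ i < j → a i j = 0) (i : ι) : (1 + a) i i = 1 := by
  rw [Matrix.add_apply, one_apply_eq, ha i i (lt_irrefl i), add_zero]

variable [Fintype ι]

theorem _root_.Matrix.IsUpperTriangular.mul_apply_self [NonUnitalNonAssocSemiring R]
    {M N : Matrix ι ι R} (hM : M.IsUpperTriangular) (hN : N.IsUpperTriangular) (i : ι) :
    (M * N) i i = M i i * N i i := by
  refine (mul_apply ..).trans <| Finset.sum_eq_single i (fun k _ hki => ?_) (by simp)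
  rcases hki.lt_or_gt with hki | hik
  · rw [hM hki, zero_mul]
  · rw [hN hik, mul_zero]

variable [CommRing R] {M : Matrix ι ι R}

theorem _root_.Matrix.IsUpperTriangular.det_eq_one (hM : M.IsUpperTriangular)
    (hdiag : ∀ i, M i i = 1) : M.det = 1 := by
  simp [det_of_isUpperTriangular hM, hdiag]

theorem _root_.Matrix.IsUpperTriangular.inv_of_diag_eq_one (hM : M.IsUpperTriangular)
    (hdiag : ∀ i, M i i = 1) : M⁻¹.IsUpperTriangular := by
  have := M.invertibleOfIsUnitDet (by simp [hM.det_eq_one hdiag])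
  exact blockTriangular_inv_of_blockTriangular hM

theorem _root_.Matrix.IsUpperTriangular.inv_apply_self_of_diag_eq_one
    (hM : M.IsUpperTriangular) (hdiag : ∀ i, M i i = 1) (i : ι) : M⁻¹ i i = 1 := by
  have hunit : IsUnit M.det := by simp [hM.det_eq_one hdiag]
  have h := congrFun (congrFun (mul_nonsing_inv M hunit) i) i
  rwa [hM.mul_apply_self (hM.inv_of_diag_eq_one hdiag) i, hdiag, one_mul, one_apply_eq] at h

theorem _root_.Matrix.mul_single_mul_sub_single {B g : Matrix ι ι R} (hB : B.IsUpperTriangular)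
    (hg : g.IsUpperTriangular) {s t : ι} (hBs : B s s = 1) (hgt : g t t = 1) (c : R) :
    B * single s t c * g - single s t c =
      c • of fun r u =>
        if r ≤ s ∧ t ≤ u ∧ (r, u) ≠ (s, t) then B r s * g t u else 0 := by
  ext r u
  rw [Matrix.sub_apply, mul_single_mul_apply, Matrix.smul_apply, of_apply, smul_eq_mul]
  by_cases hru : (r, u) = (s, t)
  · obtain ⟨rfl, rfl⟩ := Prod.ext_iff.mp hru
    simp [hBs, hgt]
  have hsingle : single s t c r u = 0 :=
    single_apply_of_ne s t c r u <| by rintro ⟨rfl, rfl⟩; exact hru rfl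
  rw [hsingle, sub_zero]
  split_ifs with hP
  · ring
  · have : s < r ∨ u < t := by
      by_contra! h
      exact hP ⟨h.1, h.2, hru⟩
    rcases this with hsr | hut
    · simp [hB hsr]
    · simp [hg hut]

end UpperTriangular

end

theorem group_commutator_formula_general (n : ℕ) (F : Type*) [Field F]
    (a : Matrix (Fin n) (Fin n) F) (ha : a ∈ utset n F) (x : F) (s t : Fin n) (hst : s < t) :
    (1 + x • Matrix.single s t (1 : F))⁻¹ * (1 + a)⁻¹ *
        (1 + x • Matrix.single s t (1 : F)) * (1 + a) =
      1 + x • ∑ r : Fin n, ∑ u : Fin n,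
        (if r ≤ s ∧ t ≤ u ∧ (r, u) ≠ (s, t) then
          ((1 + a)⁻¹ r s * (1 + a) t u) • Matrix.single r u (1 : F) else 0) := by
  have hg := isUpperTriangular_one_add ha
  have hgdiag := one_add_apply_self ha
  have hB := hg.inv_of_diag_eq_one hgdiag
  have hunit : IsUnit (1 + a).det := by simp [hg.det_eq_one hgdiag]
  have hEE : single s t x * single s t x = 0 := single_mul_single_of_ne x s t s hst.ne' x
  have hEBE : single s t x * (1 + a)⁻¹ * single s t x = 0 := by
    rw [single_mul_mul_single, hB hst, mul_zero, zero_mul, single_zero]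
  rw [smul_single, smul_eq_mul, mul_one, inv_one_add_of_mul_self_eq_zero hEE,
    one_sub_mul_mul_one_add_mul (nonsing_inv_mul _ hunit) hEBE,
    mul_single_mul_sub_single hB hg (hg.inv_apply_self_of_diag_eq_one hgdiag s) (hgdiag t),
    sum_sum_ite_smul_single_one]

/-- The fundamental commutator computation: for `a ∈ ut_n(F_q)`, `x ∈ F_q` and `s < t`,
`[1 + x e_{s,t}, 1 + a] = 1 + x ∑_{(r,u) ≻ (s,t)} ((1+a)⁻¹)_{r,s} (1+a)_{t,u} e_{r,u}`,
summing over `r ≤ s`, `t ≤ u` with `(r,u) ≠ (s,t)`. -/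
theorem group_commutator_formula (n : ℕ) (F : Type*) [Field F] [Fintype F]
    (a : Matrix (Fin n) (Fin n) F) (ha : a ∈ utset n F) (x : F) (s t : Fin n) (hst : s < t) :
    (1 + x • Matrix.single s t (1 : F))⁻¹ * (1 + a)⁻¹ *
        (1 + x • Matrix.single s t (1 : F)) * (1 + a) =
      1 + x • ∑ r : Fin n, ∑ u : Fin n,
        (if r ≤ s ∧ t ≤ u ∧ (r, u) ≠ (s, t) then
          ((1 + a)⁻¹ r s * (1 + a) t u) • Matrix.single r u (1 : F) else 0) :=
  group_commutator_formula_general n F a ha x s t hst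

end Paper
end

section
/- The number of upper sets in the poset [[n]] = {(i,j) : 1 ≤ i < j ≤ n} with order (i,j) ⪯ (r,s) iff r ≤ i < j ≤ s equals the n-th Catalan number (1/(n+1))·C(2n,n). -/
/-!
An upper set `s` of `[[n]]` is determined by its column sizes `g j = #{i | (i, j) ∈ s}`: each
column is an initial segment of `Fin n`, `g j ≤ j` because `i < j`, and `s` is upward closed
exactly when `g` is monotone. These ballot sequences obey the Catalan recurrence: cutting a ballot
sequence of length `n + 1` at the last `k` with `g k = k` leaves an arbitrary ballot sequence of
length `k` before `k` and, after subtracting `k`, an arbitrary one of length `n - k` after it.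
-/

open Matrix BigOperators

namespace Paper

variable (n : ℕ) (F : Type*) [Field F]

theorem _root_.Fin.ncard_Iio {n : ℕ} (b : Fin n) : (Set.Iio b).ncard = b := by
  rw [← Finset.coe_Iio, Set.ncard_coe_finset, Fin.card_Iio]

theorem _root_.Fin.ncard_Iic {n : ℕ} (b : Fin n) : (Set.Iic b).ncard = b + 1 := by
  rw [← Finset.coe_Iic, Set.ncard_coe_finset, Fin.card_Iic]

theorem _root_.Fin.mem_iff_lt_ncard_of_isLowerSet {n : ℕ} {D : Set (Fin n)} (hD : IsLowerSet D)
    (i : Fin n) : i ∈ D ↔ (i : ℕ) < D.ncard := by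
  constructor
  · intro hi
    have hsub : Set.Iic i ⊆ D := fun a ha => hD ha hi
    have h := Set.ncard_le_ncard hsub (Set.toFinite D)
    rw [Fin.ncard_Iic] at h
    omega
  · intro hi
    by_contra hni
    have hsub : D ⊆ Set.Iio i := fun a ha => lt_of_not_ge fun hia => hni (hD hia ha)
    have h := Set.ncard_le_ncard hsub (Set.toFinite _)
    rw [Fin.ncard_Iio] at h
    omega

abbrev Ballot (n : ℕ) : Type := {g : Fin n → ℕ // Monotone g ∧ ∀ j, g j ≤ j}

instance (n : ℕ) : Finite (Ballot n) :=
  Finite.of_injective (fun g j => (⟨g.1 j, (g.2.2 j).trans_lt j.isLt⟩ : Fin n))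
    fun _ _ h => Subtype.ext <| funext fun j => congrArg Fin.val (congrFun h j)

section

variable {n}

noncomputable def upperSetEquivBallot :
    {s : Set (Fin n × Fin n) // IsUpperSetE n s} ≃ Ballot n where
  toFun s := ⟨fun j => {i | (i, j) ∈ s.1}.ncard,
    fun j j' hjj' => Set.ncard_le_ncard
      (fun i hi => s.2.2 (i, j) hi (i, j') ((s.2.1 _ hi).trans_le hjj') ⟨le_rfl, hjj'⟩)
      (Set.toFinite _),
    fun j => by
      have hsub : {i | (i, j) ∈ s.1} ⊆ Set.Iio j := fun i hi => s.2.1 (i, j) hi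
      simpa [Fin.ncard_Iio] using Set.ncard_le_ncard hsub (Set.toFinite _)⟩
  invFun g := ⟨{p | (p.1 : ℕ) < g.1 p.2},
    fun p hp => Fin.lt_def.mpr (lt_of_lt_of_le hp (g.2.2 p.2)),
    fun p hp q _ hpq => lt_of_le_of_lt (Fin.le_def.mp hpq.1) (hp.trans_le (g.2.1 hpq.2))⟩
  left_inv s := by
    refine Subtype.ext (Set.ext fun p => ?_)
    have hcol : IsLowerSet {i | (i, p.2) ∈ s.1} := fun a b hba ha =>
      s.2.2 _ ha _ (hba.trans_lt (s.2.1 _ ha)) ⟨hba, le_rfl⟩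
    exact (Fin.mem_iff_lt_ncard_of_isLowerSet hcol p.1).symm
  right_inv g := by
    refine Subtype.ext (funext fun j => ?_)
    have hcol : {i : Fin n | ((i, j) : Fin n × Fin n) ∈ {p : Fin n × Fin n | (p.1 : ℕ) < g.1 p.2}}
        = Set.Iio ⟨g.1 j, (g.2.2 j).trans_lt j.isLt⟩ := by
      ext i; exact Iff.rfl
    exact (congrArg Set.ncard hcol).trans (Fin.ncard_Iio _)

namespace Ballot

theorem apply_zero (g : Ballot (n + 1)) : g.1 0 = 0 := Nat.le_zero.mp (g.2.2 0)

def lastTouch (g : Ballot (n + 1)) : Fin (n + 1) :=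
  (Finset.univ.filter fun j => g.1 j = j).max' ⟨0, by simp [apply_zero]⟩

theorem lastTouch_eq_iff {g : Ballot (n + 1)} {k : Fin (n + 1)} :
    lastTouch g = k ↔ g.1 k = k ∧ ∀ j, k < j → g.1 j < j := by
  have hmem := Finset.max'_mem (Finset.univ.filter fun j => g.1 j = j) ⟨0, by simp [apply_zero]⟩
  have hle : ∀ j, g.1 j = j → j ≤ lastTouch g := fun j hj => Finset.le_max' _ j (by simpa using hj)
  constructor
  · rintro rfl
    refine ⟨(Finset.mem_filter.mp hmem).2, fun j hj => (g.2.2 j).lt_of_ne fun hgj => ?_⟩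
    exact absurd (hle j hgj) (not_le.mpr hj)
  · rintro ⟨hk, hgt⟩
    refine le_antisymm (not_lt.mp fun hlt => ?_) (hle k hk)
    exact (hgt _ hlt).ne (Finset.mem_filter.mp hmem).2

def rightEmb (k : Fin (n + 1)) (t : Fin (n - k)) : Fin (n + 1) :=
  ⟨k + 1 + t, by omega⟩

theorem lt_rightEmb (k : Fin (n + 1)) (t : Fin (n - k)) : k < rightEmb k t :=
  Fin.lt_def.mpr (by simp only [rightEmb]; omega)

def restrictLeft (k : Fin (n + 1)) (g : Ballot (n + 1)) : Ballot k :=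
  ⟨fun t => g.1 (Fin.castLE k.isLt.le t), fun _ _ h => g.2.1 h, fun _ => g.2.2 _⟩

def restrictRight {k : Fin (n + 1)} (g : Ballot (n + 1)) (hg : lastTouch g = k) :
    Ballot (n - k) :=
  ⟨fun t => g.1 (rightEmb k t) - k,
    fun a b h => Nat.sub_le_sub_right (g.2.1 (Fin.le_def.mpr (by simp [rightEmb, h]))) _,
    fun t => by
      have := (lastTouch_eq_iff.mp hg).2 _ (lt_rightEmb k t)
      simp only [rightEmb] at this ⊢
      omega⟩

def glueFun (k : Fin (n + 1)) (g₁ : Fin k → ℕ) (g₂ : Fin (n - k) → ℕ) (j : Fin (n + 1)) : ℕ :=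
  if h : (j : ℕ) < k then g₁ ⟨j, h⟩
  else if h' : (k : ℕ) < j then k + g₂ ⟨j - k - 1, by omega⟩ else k

section glueFun

variable (k : Fin (n + 1)) {g₁ : Fin k → ℕ} {g₂ : Fin (n - k) → ℕ}

theorem glueFun_castLE (t : Fin k) : glueFun k g₁ g₂ (Fin.castLE k.isLt.le t) = g₁ t := by
  simp [glueFun]

theorem glueFun_self : glueFun k g₁ g₂ k = k := by
  simp [glueFun]

theorem glueFun_of_gt {j : Fin (n + 1)} (hj : (k : ℕ) < j) :
    glueFun k g₁ g₂ j = k + g₂ ⟨j - k - 1, by omega⟩ := by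
  simp [glueFun, hj, hj.not_gt]

theorem glueFun_rightEmb (t : Fin (n - k)) : glueFun k g₁ g₂ (rightEmb k t) = k + g₂ t := by
  rw [glueFun_of_gt k (lt_rightEmb k t)]
  congr 2
  ext
  simp only [rightEmb]
  omega

theorem monotone_glueFun (hg₁ : Monotone g₁) (hg₁k : ∀ t, g₁ t ≤ k) (hg₂ : Monotone g₂) :
    Monotone (glueFun k g₁ g₂) := by
  intro i j hij
  have hij : (i : ℕ) ≤ j := hij
  unfold glueFun
  split_ifs <;> first
    | omega
    | exact hg₁ (Fin.mk_le_mk.mpr hij)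
    | exact Nat.add_le_add_left (hg₂ (Fin.mk_le_mk.mpr (by omega))) _
    | exact (hg₁k _).trans (by omega)

theorem glueFun_le (hg₁ : ∀ t, g₁ t ≤ t) (hg₂ : ∀ t, g₂ t ≤ t) (j : Fin (n + 1)) :
    glueFun k g₁ g₂ j ≤ j := by
  unfold glueFun
  split_ifs with h h'
  · exact hg₁ _
  · have := hg₂ ⟨j - k - 1, by omega⟩
    simp only at this
    omega
  · omega

end glueFun

def glue (k : Fin (n + 1)) (g₁ : Ballot k) (g₂ : Ballot (n - k)) : Ballot (n + 1) :=
  ⟨glueFun k g₁.1 g₂.1,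
    monotone_glueFun k g₁.2.1 (fun t => (g₁.2.2 t).trans t.isLt.le) g₂.2.1,
    glueFun_le k g₁.2.2 g₂.2.2⟩

theorem lastTouch_glue (k : Fin (n + 1)) (g₁ : Ballot k) (g₂ : Ballot (n - k)) :
    lastTouch (glue k g₁ g₂) = k := by
  refine lastTouch_eq_iff.mpr ⟨glueFun_self k, fun j hj => ?_⟩
  have hj : (k : ℕ) < j := hj
  have := g₂.2.2 ⟨j - k - 1, by omega⟩
  simp only [glue, glueFun_of_gt k hj] at this ⊢
  omega

def lastTouchFiberEquiv (k : Fin (n + 1)) :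
    {g : Ballot (n + 1) // lastTouch g = k} ≃ Ballot k × Ballot (n - k) where
  toFun g := (restrictLeft k g.1, restrictRight g.1 g.2)
  invFun x := ⟨glue k x.1 x.2, lastTouch_glue k x.1 x.2⟩
  left_inv := by
    rintro ⟨g, hg⟩
    obtain ⟨hk, -⟩ := lastTouch_eq_iff.mp hg
    refine Subtype.ext (Subtype.ext (funext fun j => ?_))
    simp only [glue, glueFun, restrictLeft, restrictRight, rightEmb]
    split_ifs with h h'
    · rfl
    · have hkj : g.1 k ≤ g.1 j := g.2.1 (Fin.le_def.mpr h'.le)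
      have hj : (⟨k + 1 + (j - k - 1), by omega⟩ : Fin (n + 1)) = j := Fin.ext (by simp only; omega)
      rw [hj]
      omega
    · rw [← hk]; exact congrArg g.1 (Fin.ext (by omega))
  right_inv := by
    rintro ⟨g₁, g₂⟩
    refine Prod.ext (Subtype.ext (funext fun t => ?_)) (Subtype.ext (funext fun t => ?_))
    · exact glueFun_castLE k t
    · exact (congrArg (· - (k : ℕ)) (glueFun_rightEmb k t)).trans (by simp)

theorem card_succ (n : ℕ) : Nat.card (Ballot (n + 1)) =
    ∑ k : Fin (n + 1), Nat.card (Ballot k) * Nat.card (Ballot (n - k)) := by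
  rw [← Nat.card_congr (Equiv.sigmaFiberEquiv lastTouch), Nat.card_sigma]
  simp_rw [Nat.card_congr (lastTouchFiberEquiv _), Nat.card_prod]

theorem card_eq_catalan (n : ℕ) : Nat.card (Ballot n) = catalan n := by
  induction n using Nat.strong_induction_on with
  | _ n ih =>
    cases n with
    | zero =>
      rw [catalan_zero, Nat.card_eq_one_iff_unique]
      exact ⟨⟨fun _ _ => Subtype.ext (funext fun j => j.elim0)⟩,
        ⟨⟨Fin.elim0, fun a => a.elim0, fun j => j.elim0⟩⟩⟩
    | succ n =>
      rw [card_succ, catalan_succ]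
      refine Finset.sum_congr rfl fun k _ => ?_
      rw [ih k (by omega), ih (n - k) (by omega)]

end Ballot

end

/-- The number of upper sets of the poset `[[n]]` is the `n`-th Catalan number
`(1/(n+1)) * C(2n, n)`. -/
theorem card_upperSets_eq_catalan (n : ℕ) :
    Nat.card {s : Set (Fin n × Fin n) // IsUpperSetE n s} = (2 * n).choose n / (n + 1) := by
  rw [Nat.card_congr upperSetEquivBallot, Ballot.card_eq_catalan, catalan_eq_centralBinom_div,
    Nat.centralBinom_eq_two_mul_choose]

end Paper
end

section
/- Let n be a Lie algebra ideal of the strictly upper triangular Lie algebra ut_n(F_q), and let λ be the set of minimal elements of its support (where the support supp(n) = {(i,j) : a_{i,j} ≠ 0 for some a ∈ n} is an upper set in [[n]]). Then [ut_n(F_q), [ut_n(F_q), n]] equals ut_{↑²λ}, the span of matrix units e_{i,l} over all (i,l) in the upper set of elements at height at least 2 above λ, i.e., (i,l) such that there is (j,k) ∈ λ with i ≤ j < k ≤ l and (l - i) ≥ (k - j) + 2. -/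
open Matrix BigOperators

namespace Paper

variable (n : ℕ) (F : Type*) [Field F]

/-!
Bracketing with `ut_n` raises the height of the support by at least one, so
`[ut_n, [ut_n, 𝔫]] ⊆ ut_{↑²λ}`. Conversely let `(r, s)` lie at height `≥ 2` above a
minimal `(i, j)`, and `a ∈ 𝔫` with `a i j ≠ 0`. If `r < i` and `j < s`, then
`[e_{ri}, [e_{js}, a]] = -a_{ij} e_{rs}`. If `r = i`, bracketing with `e_{j,j+1}` and then
`e_{j+1,s}` copies column `j` of `a` into column `s`; minimality of `(i, j)` kills the entries
below `a i j`, and the entries above it give units of the first kind, so `e_{is}` splits off.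
The case `j = s` is the mirror image, with rows.
-/

variable {n F}

lemma exists_mem_minimalsE_edgeLe {S : Set (Fin n × Fin n)} (hS : IsEdgeSet n S)
    {p : Fin n × Fin n} (hp : p ∈ S) : ∃ q ∈ minimalsE n S, edgeLe n q p := by
  -- an element of least height below `p` is minimal
  obtain ⟨q, ⟨hqS, hqp⟩, hleast⟩ := Set.exists_min_image {q | q ∈ S ∧ edgeLe n q p}
    (fun q => (q.2 : ℕ) - q.1) (Set.toFinite _) ⟨p, hp, le_rfl, le_rfl⟩
  refine ⟨q, ⟨hqS, fun q' hq'S hq'q => ?_⟩, hqp⟩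
  have hq' := hleast q' ⟨hq'S, hqp.1.trans hq'q.1, hq'q.2.trans hqp.2⟩
  have := hS q' hq'S
  obtain ⟨h1, h2⟩ := hq'q
  simp only [Fin.le_def, Fin.lt_def] at *
  exact Prod.ext (Fin.ext (by omega)) (Fin.ext (by omega))

lemma mem_upNum_succ_of_lt_of_mem {lam : Set (Fin n × Fin n)} {l : ℕ} {y k x : Fin n}
    (hyk : y < k) (hkx : (k, x) ∈ upNum n lam l) : (y, x) ∈ upNum n lam (l + 1) := by
  obtain ⟨hkx, p, hp, ⟨h1, h2⟩, hh⟩ := hkx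
  dsimp only at hkx h1 h2 hh
  refine ⟨hyk.trans hkx, p, hp, ⟨hyk.le.trans h1, h2⟩, ?_⟩
  have := Fin.lt_def.mp hyk
  have := Fin.lt_def.mp hkx
  dsimp only
  omega

lemma mem_upNum_succ_of_mem_of_lt {lam : Set (Fin n × Fin n)} {l : ℕ} {y k x : Fin n}
    (hyk : (y, k) ∈ upNum n lam l) (hkx : k < x) : (y, x) ∈ upNum n lam (l + 1) := by
  obtain ⟨hyk, p, hp, ⟨h1, h2⟩, hh⟩ := hyk
  dsimp only at hyk h1 h2 hh
  refine ⟨hyk.trans hkx, p, hp, ⟨h1, h2.trans hkx.le⟩, ?_⟩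
  have := Fin.lt_def.mp hyk
  have := Fin.lt_def.mp hkx
  dsimp only
  omega

lemma lt_of_apply_ne_zero_of_mem_utset {a : Matrix (Fin n) (Fin n) F} (ha : a ∈ utset n F)
    {i j : Fin n} (h : a i j ≠ 0) : i < j :=
  by_contra fun hij => h (ha i j hij)

lemma single_mem_utset {i j : Fin n} (hij : i < j) : Matrix.single i j (1 : F) ∈ utset n F := by
  intro y x hyx
  refine Matrix.single_apply_of_ne _ _ _ _ _ ?_
  rintro ⟨rfl, rfl⟩
  exact hyx hij

lemma lie_single_apply (i j y x : Fin n) (M : Matrix (Fin n) (Fin n) F) :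
    ⁅Matrix.single i j (1 : F), M⁆ y x =
      (if y = i then M j x else 0) - (if x = j then M y i else 0) := by
  rcases eq_or_ne y i with rfl | hy <;> rcases eq_or_ne x j with rfl | hx <;>
    simp [Ring.lie_def, *]

lemma lie_mem_brSpan {X Y : Set (Matrix (Fin n) (Fin n) F)} {a b : Matrix (Fin n) (Fin n) F}
    (ha : a ∈ X) (hb : b ∈ Y) : ⁅a, b⁆ ∈ brSpan n F X Y :=
  Submodule.subset_span ⟨a, ha, b, hb, rfl⟩

lemma brSpan_mono {X Y Y' : Set (Matrix (Fin n) (Fin n) F)} (h : Y ⊆ Y') :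
    brSpan n F X Y ≤ brSpan n F X Y' :=
  Submodule.span_mono fun _ ⟨a, ha, b, hb, hz⟩ => ⟨a, ha, b, h hb, hz⟩

lemma mem_of_forall_single_mem {D : Submodule F (Matrix (Fin n) (Fin n) F)}
    {W : Matrix (Fin n) (Fin n) F} (h : ∀ y x, W y x ≠ 0 → Matrix.single y x (1 : F) ∈ D) :
    W ∈ D := by
  rw [Matrix.matrix_eq_sum_single W]
  refine Submodule.sum_mem _ fun y _ => Submodule.sum_mem _ fun x _ => ?_
  by_cases hW : W y x = 0
  · simp [hW]
  · simpa [Matrix.smul_single] using D.smul_mem (W y x) (h y x hW)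

lemma single_mem_of_mem_of_apply_ne_zero {D : Submodule F (Matrix (Fin n) (Fin n) F)}
    {Z : Matrix (Fin n) (Fin n) F} (hZ : Z ∈ D) {r s : Fin n} (hrs : Z r s ≠ 0)
    (h : ∀ y x, (y, x) ≠ (r, s) → Z y x ≠ 0 → Matrix.single y x (1 : F) ∈ D) :
    Matrix.single r s (1 : F) ∈ D := by
  have hrest : Z - Z r s • Matrix.single r s (1 : F) ∈ D := by
    refine mem_of_forall_single_mem fun y x hyx => ?_
    have hne : (y, x) ≠ (r, s) := by
      rintro ⟨⟩
      simp at hyx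
    have hsingle : Matrix.single r s (Z r s) y x = 0 := by
      refine Matrix.single_apply_of_ne _ _ _ _ _ ?_
      rintro ⟨rfl, rfl⟩
      exact hne rfl
    exact h y x hne (by simpa [hsingle] using hyx)
  have := D.smul_mem (Z r s)⁻¹ (D.sub_mem hZ hrest)
  rwa [sub_sub_cancel, smul_smul, inv_mul_cancel₀ hrs, one_smul] at this

variable (F) in
def supportedOn (s : Set (Fin n × Fin n)) : Submodule F (Matrix (Fin n) (Fin n) F) where
  carrier := {m | ∀ y x, (y, x) ∉ s → m y x = 0}
  add_mem' ha hb y x h := by simp [ha y x h, hb y x h]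
  zero_mem' _ _ _ := rfl
  smul_mem' c _ ha y x h := by simp [ha y x h]

lemma mem_of_apply_ne_zero_of_mem_supportedOn {s : Set (Fin n × Fin n)}
    {m : Matrix (Fin n) (Fin n) F} (hm : m ∈ supportedOn F s) {y x : Fin n} (h : m y x ≠ 0) :
    (y, x) ∈ s :=
  by_contra fun hyx => h (hm y x hyx)

lemma supportedOn_le_utOf (s : Set (Fin n × Fin n)) : supportedOn F s ≤ utOf n F s :=
  fun _ hm => mem_of_forall_single_mem fun y x hyx =>
    Submodule.subset_span ⟨(y, x), mem_of_apply_ne_zero_of_mem_supportedOn hm hyx, rfl⟩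

lemma lie_mem_supportedOn_upNum_succ {lam : Set (Fin n × Fin n)} {l : ℕ}
    {a b : Matrix (Fin n) (Fin n) F} (ha : a ∈ utset n F)
    (hb : b ∈ supportedOn F (upNum n lam l)) :
    ⁅a, b⁆ ∈ supportedOn F (upNum n lam (l + 1)) := by
  intro y x hyx
  have hab : ∀ k, a y k * b k x = 0 := fun k => by
    by_contra hne
    obtain ⟨hak, hbk⟩ := mul_ne_zero_iff.mp hne
    exact hyx (mem_upNum_succ_of_lt_of_mem (lt_of_apply_ne_zero_of_mem_utset ha hak)
      (mem_of_apply_ne_zero_of_mem_supportedOn hb hbk))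
  have hba : ∀ k, b y k * a k x = 0 := fun k => by
    by_contra hne
    obtain ⟨hbk, hak⟩ := mul_ne_zero_iff.mp hne
    exact hyx (mem_upNum_succ_of_mem_of_lt (mem_of_apply_ne_zero_of_mem_supportedOn hb hbk)
      (lt_of_apply_ne_zero_of_mem_utset ha hak))
  simp [Ring.lie_def, Matrix.mul_apply, hab, hba]

lemma brSpan_le_supportedOn_upNum_succ (lam : Set (Fin n × Fin n)) (l : ℕ) :
    brSpan n F (utset n F) (supportedOn F (upNum n lam l)) ≤
      supportedOn F (upNum n lam (l + 1)) :=
  Submodule.span_le.mpr fun _ ⟨_, ha, _, hb, hz⟩ => hz ▸ lie_mem_supportedOn_upNum_succ ha hb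

variable {Y : Set (Matrix (Fin n) (Fin n) F)}

lemma subset_supportedOn_upNum_zero (hY : Y ⊆ utset n F) :
    Y ⊆ supportedOn F (upNum n (minimalsE n (suppOf n F Y)) 0) := by
  intro a ha y x hyx
  by_contra hne
  have hlt := lt_of_apply_ne_zero_of_mem_utset (hY ha) hne
  obtain ⟨q, hq, h1, h2⟩ :=
    exists_mem_minimalsE_edgeLe (S := suppOf n F Y) (fun p hp => hp.1) (p := (y, x))
      ⟨hlt, a, ha, hne⟩
  refine hyx ⟨hlt, q, hq, ⟨h1, h2⟩, ?_⟩
  have := Fin.lt_def.mp hq.1.1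
  have := Fin.le_def.mp h1
  have := Fin.le_def.mp h2
  dsimp only at *
  omega

lemma lie_single_lie_single_eq_smul_single {a : Matrix (Fin n) (Fin n) F} {r i j s : Fin n}
    (hij : i ≠ j) (hrs : r ≠ s) (hasr : a s r = 0) :
    ⁅Matrix.single r i (1 : F), ⁅Matrix.single j s (1 : F), a⁆⁆ =
      (-a i j) • Matrix.single r s 1 := by
  ext y x
  rw [lie_single_apply, lie_single_apply, lie_single_apply, Matrix.smul_apply, Matrix.single_apply]
  split_ifs <;> subst_vars <;> simp_all

lemma lie_single_lie_single_apply_col {a : Matrix (Fin n) (Fin n) F} {j t s : Fin n}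
    (hsj : s ≠ j) (hasj : a s j = 0) (hatt : a t t = 0) (y x : Fin n) :
    ⁅Matrix.single t s (1 : F), ⁅Matrix.single j t (1 : F), a⁆⁆ y x =
      if x = s then a y j else 0 := by
  rw [lie_single_apply, lie_single_apply, lie_single_apply]
  split_ifs <;> subst_vars <;> simp_all

lemma lie_single_lie_single_apply_row {a : Matrix (Fin n) (Fin n) F} {r t i : Fin n}
    (hri : r ≠ i) (hair : a i r = 0) (hatt : a t t = 0) (y x : Fin n) :
    ⁅Matrix.single r t (1 : F), ⁅Matrix.single t i (1 : F), a⁆⁆ y x =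
      if y = r then a i x else 0 := by
  rw [lie_single_apply, lie_single_apply, lie_single_apply]
  split_ifs <;> subst_vars <;> simp_all

lemma single_mem_brSpan_brSpan_of_lt_of_lt (hY : Y ⊆ utset n F)
    {a : Matrix (Fin n) (Fin n) F} (ha : a ∈ Y) {r i j s : Fin n} (hri : r < i) (hjs : j < s)
    (haij : a i j ≠ 0) :
    Matrix.single r s (1 : F) ∈ brSpan n F (utset n F) (brSpan n F (utset n F) Y) := by
  have hij := lt_of_apply_ne_zero_of_mem_utset (hY ha) haij
  have hrs : r < s := hri.trans (hij.trans hjs)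
  have hZ := lie_mem_brSpan (single_mem_utset hri) (lie_mem_brSpan (single_mem_utset hjs) ha)
  rw [lie_single_lie_single_eq_smul_single hij.ne hrs.ne (hY ha s r hrs.not_gt)] at hZ
  exact (Submodule.smul_mem_iff _ (neg_ne_zero.mpr haij)).mp hZ

lemma single_mem_brSpan_brSpan_of_same_row (hY : Y ⊆ utset n F)
    {a : Matrix (Fin n) (Fin n) F} (ha : a ∈ Y)
    {i j s : Fin n} (hjs : (j : ℕ) + 2 ≤ s) (haij : a i j ≠ 0)
    (hmin : ∀ y, i < y → a y j = 0) :
    Matrix.single i s (1 : F) ∈ brSpan n F (utset n F) (brSpan n F (utset n F) Y) := by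
  have hsn := s.isLt
  let t : Fin n := ⟨j + 1, by omega⟩
  have hjt : j < t := Fin.lt_def.mpr (Nat.lt_succ_self _)
  have hts : t < s := Fin.lt_def.mpr (by simp only [t]; omega)
  have hZ := lie_mem_brSpan (single_mem_utset hts) (lie_mem_brSpan (single_mem_utset hjt) ha)
  have hZ_apply := lie_single_lie_single_apply_col (hjt.trans hts).ne'
    (hY ha s j (hjt.trans hts).not_gt) (hY ha t t (lt_irrefl t))
  refine single_mem_of_mem_of_apply_ne_zero hZ (by simpa [hZ_apply]) fun y x hyx hZyx => ?_
  rw [hZ_apply] at hZyx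
  obtain rfl : x = s := by_contra fun hxs => hZyx (if_neg hxs)
  rw [if_pos rfl] at hZyx
  have hyi : y < i := lt_of_le_of_ne (not_lt.mp (mt (hmin y) hZyx)) (by rintro rfl; exact hyx rfl)
  exact single_mem_brSpan_brSpan_of_lt_of_lt hY ha hyi (hjt.trans hts) haij

lemma single_mem_brSpan_brSpan_of_same_col (hY : Y ⊆ utset n F)
    {a : Matrix (Fin n) (Fin n) F} (ha : a ∈ Y)
    {r i j : Fin n} (hri : (r : ℕ) + 2 ≤ i) (haij : a i j ≠ 0)
    (hmin : ∀ x, x < j → a i x = 0) :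
    Matrix.single r j (1 : F) ∈ brSpan n F (utset n F) (brSpan n F (utset n F) Y) := by
  have hin := i.isLt
  let t : Fin n := ⟨r + 1, by omega⟩
  have hrt : r < t := Fin.lt_def.mpr (Nat.lt_succ_self _)
  have hti : t < i := Fin.lt_def.mpr (by simp only [t]; omega)
  have hZ := lie_mem_brSpan (single_mem_utset hrt) (lie_mem_brSpan (single_mem_utset hti) ha)
  have hZ_apply := lie_single_lie_single_apply_row (hrt.trans hti).ne
    (hY ha i r (hrt.trans hti).not_gt) (hY ha t t (lt_irrefl t))
  refine single_mem_of_mem_of_apply_ne_zero hZ (by simpa [hZ_apply]) fun y x hyx hZyx => ?_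
  rw [hZ_apply] at hZyx
  obtain rfl : y = r := by_contra fun hyr => hZyx (if_neg hyr)
  rw [if_pos rfl] at hZyx
  have hjx : j < x := lt_of_le_of_ne (not_lt.mp (mt (hmin x) hZyx)) (by rintro rfl; exact hyx rfl)
  exact single_mem_brSpan_brSpan_of_lt_of_lt hY ha (hrt.trans hti) hjx haij

lemma single_mem_brSpan_brSpan_of_mem_upNum_two (hY : Y ⊆ utset n F) {r s : Fin n}
    (hrs : (r, s) ∈ upNum n (minimalsE n (suppOf n F Y)) 2) :
    Matrix.single r s (1 : F) ∈ brSpan n F (utset n F) (brSpan n F (utset n F) Y) := by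
  obtain ⟨-, ⟨i, j⟩, ⟨⟨hij, a, ha, haij⟩, hmin⟩, ⟨hri, hjs⟩, hheight⟩ := hrs
  dsimp only at hij haij hri hjs hheight
  have hminimal : ∀ y x, a y x ≠ 0 → i ≤ y → x ≤ j → (y, x) = (i, j) :=
    fun y x hyx hiy hxj =>
      hmin (y, x) ⟨lt_of_apply_ne_zero_of_mem_utset (hY ha) hyx, a, ha, hyx⟩ ⟨hiy, hxj⟩
  have hij' := Fin.lt_def.mp hij
  rcases hri.lt_or_eq with hri | rfl <;> rcases hjs.lt_or_eq with hjs | rfl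
  · exact single_mem_brSpan_brSpan_of_lt_of_lt hY ha hri hjs haij
  · refine single_mem_brSpan_brSpan_of_same_col hY ha (by omega) haij fun x hxj => ?_
    by_contra hx
    exact hxj.ne (congrArg Prod.snd (hminimal i x hx le_rfl hxj.le))
  · refine single_mem_brSpan_brSpan_of_same_row hY ha (by omega) haij fun y hiy => ?_
    by_contra hy
    exact hiy.ne' (congrArg Prod.fst (hminimal y j hy hiy.le le_rfl))
  · omega

lemma utOf_upNum_two_le_brSpan_brSpan (hY : Y ⊆ utset n F) :
    utOf n F (upNum n (minimalsE n (suppOf n F Y)) 2) ≤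
      brSpan n F (utset n F) (brSpan n F (utset n F) Y) :=
  Submodule.span_le.mpr fun _ ⟨_, hp, he⟩ =>
    he ▸ single_mem_brSpan_brSpan_of_mem_upNum_two hY hp

lemma brSpan_brSpan_le_utOf_upNum_two (hY : Y ⊆ utset n F) :
    brSpan n F (utset n F) (brSpan n F (utset n F) Y) ≤
      utOf n F (upNum n (minimalsE n (suppOf n F Y)) 2) :=
  calc brSpan n F (utset n F) (brSpan n F (utset n F) Y)
      ≤ brSpan n F (utset n F) (supportedOn F (upNum n (minimalsE n (suppOf n F Y)) 1)) :=
        brSpan_mono <| (brSpan_mono (subset_supportedOn_upNum_zero hY)).trans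
          (brSpan_le_supportedOn_upNum_succ _ 0)
    _ ≤ supportedOn F (upNum n (minimalsE n (suppOf n F Y)) 2) :=
        brSpan_le_supportedOn_upNum_succ _ 1
    _ ≤ utOf n F (upNum n (minimalsE n (suppOf n F Y)) 2) := supportedOn_le_utOf _

theorem double_bracket_eq_upNum_two_general (n : ℕ) (F : Type*) [Field F]
    (N : Submodule F (Matrix (Fin n) (Fin n) F))
    (hsub : (N : Set (Matrix (Fin n) (Fin n) F)) ⊆ utset n F) :
    brSpan n F (utset n F)
        (brSpan n F (utset n F) (N : Set (Matrix (Fin n) (Fin n) F)) :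
          Set (Matrix (Fin n) (Fin n) F)) =
      utOf n F (upNum n (minimalsE n (suppOf n F (N : Set (Matrix (Fin n) (Fin n) F)))) 2) :=
  le_antisymm (brSpan_brSpan_le_utOf_upNum_two hsub) (utOf_upNum_two_le_brSpan_brSpan hsub)

/-- For a Lie ideal `𝔫` of `ut_n(F_q)` with `supp(𝔫) = ↑λ`, one has
`[ut_n, [ut_n, 𝔫]] = ut_{↑²λ}`. -/
theorem double_bracket_eq_upNum_two (n : ℕ) (F : Type*) [Field F] [Fintype F]
    (N : Submodule F (Matrix (Fin n) (Fin n) F))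
    (hsub : (N : Set (Matrix (Fin n) (Fin n) F)) ⊆ utset n F)
    (hideal : ∀ a ∈ utset n F, ∀ b ∈ N, a * b - b * a ∈ N) :
    brSpan n F (utset n F)
        (brSpan n F (utset n F) (N : Set (Matrix (Fin n) (Fin n) F)) :
          Set (Matrix (Fin n) (Fin n) F)) =
      utOf n F (upNum n (minimalsE n (suppOf n F (N : Set (Matrix (Fin n) (Fin n) F)))) 2) :=
  double_bracket_eq_upNum_two_general n F N hsub

end Paper
end

section
/- Let λ be a nonnesting set partition of [n] (an antichain in [[n]] under the order (i,j) ⪯ (r,s) iff r ≤ i < j ≤ s), and let a be a strictly upper triangular matrix supported on the upper set generated by λ. For any j with 1 ≤ j < n, the coset [F_q·e_{j,j+1}, a] + ut_{↑²λ} in ut_{↑¹λ}/ut_{↑²λ} equals: F_q(a_{i,j}e_{i,j+1} - a_{j+1,l}e_{j,l}) + ut_{↑²λ} if both (i,j) ∈ λ and (j+1,l) ∈ λ for some i, l; F_q(a_{i,j}e_{i,j+1}) + ut_{↑²λ} if (i,j) ∈ λ but no (j+1,l) ∈ λ; F_q(a_{j+1,l}e_{j,l}) + ut_{↑²λ} if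 (j+1,l) ∈ λ but no (i,j) ∈ λ; and ut_{↑²λ} otherwise. -/
open Matrix BigOperators

namespace Paper

variable (n : ℕ) (F : Type*) [Field F]

/-- Sum of two sets of matrices. -/
def addSet {M : Type*} [Add M] (A B : Set M) : Set M := {z | ∃ x ∈ A, ∃ y ∈ B, z = x + y}

/-!
Expanding the bracket gives `[e_{j,j+1}, a] = ∑_q a_{j+1,q} e_{j,q} - ∑_p a_{p,j} e_{p,j+1}`.
A summand indexed by a pair of `↑λ \ λ` lies at least one step above `λ`, and widening it by one
column or row puts it in `↑²λ`; so modulo `ut_{↑²λ}` only the summands indexed by `λ` survive, and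
since `λ` is a set partition there is at most one of them in each sum.
-/

section Lines

variable {K V : Type*} [Ring K] [AddCommGroup V] [Module K V]

lemma setOf_eq_smul_eq_span_singleton (u : V) :
    {z | ∃ x : K, z = x • u} = ((K ∙ u : Submodule K V) : Set V) := by
  ext z
  simp [Submodule.mem_span_singleton, eq_comm]

lemma addSet_coe_submodule (A B : Submodule K V) :
    addSet (A : Set V) (B : Set V) = ((A ⊔ B : Submodule K V) : Set V) := by
  ext z
  simp [addSet, Submodule.mem_sup, eq_comm]

lemma span_singleton_sup_eq_of_sub_mem {M : Submodule K V} {u v : V} (h : u - v ∈ M) :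
    K ∙ u ⊔ M = K ∙ v ⊔ M := by
  have hv : v - u ∈ M := by simpa using M.neg_mem h
  refine le_antisymm (sup_le ?_ le_sup_right) (sup_le ?_ le_sup_right) <;>
    rw [Submodule.span_singleton_le_iff_mem]
  · simpa using Submodule.add_mem_sup (Submodule.mem_span_singleton_self v) h
  · simpa using Submodule.add_mem_sup (Submodule.mem_span_singleton_self u) hv

lemma span_singleton_neg_eq (v : V) : K ∙ (-v) = K ∙ v := by
  rw [← Set.neg_singleton, Submodule.span_neg]

end Lines

section Brackets

variable {ι R : Type*} [Fintype ι] [DecidableEq ι] [Ring R]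

lemma single_one_mul_sub_mul_single_one (a : Matrix ι ι R) (j k : ι) :
    single j k (1 : R) * a - a * single j k 1 =
      ∑ q, a k q • single j q (1 : R) - ∑ p, a p j • single p k (1 : R) := by
  ext p q
  simp [Matrix.sum_apply, Matrix.single_apply, Matrix.mul_apply, ite_and]

end Brackets

lemma sum_univ_filter_eq_of_unique {α M : Type*} [Fintype α] [AddCommMonoid M]
    {p : α → Prop} [DecidablePred p] {f : α → M} {l : α} (hl : p l) (huniq : ∀ q, p q → q = l) :
    ∑ q ∈ Finset.univ.filter p, f q = f l :=
  Finset.sum_eq_single_of_mem l (Finset.mem_filter.2 ⟨Finset.mem_univ l, hl⟩)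
    fun q hq hql => absurd (huniq q (Finset.mem_filter.1 hq).2) hql

section Support

variable {n : ℕ} {F : Type*} [Field F] {lam : Set (Fin n × Fin n)}

lemma smul_single_mem_utOf {s : Set (Fin n × Fin n)} {c : F} {p q : Fin n}
    (h : c ≠ 0 → (p, q) ∈ s) : c • single p q (1 : F) ∈ utOf n F s := by
  by_cases hc : c = 0
  · simp [hc]
  · exact Submodule.smul_mem _ c (Submodule.subset_span ⟨(p, q), h hc, rfl⟩)

lemma mem_upNum_one_of_mem_upGen {q : Fin n × Fin n} (hq : q ∈ upGen n lam) (hq' : q ∉ lam) :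
    q ∈ upNum n lam 1 := by
  obtain ⟨hlt, p, hp, hle₁, hle₂⟩ := hq
  have hne : p ≠ q := fun h => hq' (h ▸ hp)
  have hne' : (p.1 : ℕ) ≠ q.1 ∨ (p.2 : ℕ) ≠ q.2 := by
    by_contra! h
    exact hne (Prod.ext (Fin.ext h.1) (Fin.ext h.2))
  refine ⟨hlt, p, hp, ⟨hle₁, hle₂⟩, ?_⟩
  have := Fin.le_def.1 hle₁
  have := Fin.le_def.1 hle₂
  have := Fin.lt_def.1 hlt
  omega

lemma mem_upNum_add_of_edgeLe {l k : ℕ} {q q' : Fin n × Fin n} (hq : q ∈ upNum n lam l)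
    (hle : edgeLe n q q') (hk : (q.2 : ℕ) - q.1 + k ≤ (q'.2 : ℕ) - q'.1) :
    q' ∈ upNum n lam (l + k) := by
  obtain ⟨hlt, p, hp, ⟨hp₁, hp₂⟩, hpl⟩ := hq
  refine ⟨lt_of_le_of_lt hle.1 (lt_of_lt_of_le hlt hle.2), p, hp,
    ⟨hle.1.trans hp₁, hp₂.trans hle.2⟩, by omega⟩

open Classical in
lemma single_mul_sub_mul_single_sub_mem_utOf {a : Matrix (Fin n) (Fin n) F}
    (hsupp : ∀ p : Fin n × Fin n, a p.1 p.2 ≠ 0 → p ∈ upGen n lam)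
    {j j' : Fin n} (hj : (j' : ℕ) = (j : ℕ) + 1) :
    single j j' (1 : F) * a - a * single j j' 1 -
        (∑ q ∈ Finset.univ.filter (fun q => (j', q) ∈ lam), a j' q • single j q (1 : F) -
          ∑ p ∈ Finset.univ.filter (fun p => (p, j) ∈ lam), a p j • single p j' (1 : F)) ∈
      utOf n F (upNum n lam 2) := by
  rw [single_one_mul_sub_mul_single_one,
    ← Finset.sum_filter_add_sum_filter_not Finset.univ (fun q => (j', q) ∈ lam),
    ← Finset.sum_filter_add_sum_filter_not Finset.univ (fun p => (p, j) ∈ lam),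
    add_sub_add_comm, add_sub_cancel_left]
  refine sub_mem (Submodule.sum_mem _ fun q hq => smul_single_mem_utOf fun hne => ?_)
    (Submodule.sum_mem _ fun p hp => smul_single_mem_utOf fun hne => ?_)
  · have h1 := mem_upNum_one_of_mem_upGen (hsupp (j', q) hne) (Finset.mem_filter.1 hq).2
    have : (j' : ℕ) < q := Fin.lt_def.1 h1.1
    exact mem_upNum_add_of_edgeLe (k := 1) h1 ⟨Fin.le_def.2 (by dsimp only; omega), le_rfl⟩
      (by dsimp only; omega)
  · have h1 := mem_upNum_one_of_mem_upGen (hsupp (p, j) hne) (Finset.mem_filter.1 hp).2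
    have : (p : ℕ) < j := Fin.lt_def.1 h1.1
    exact mem_upNum_add_of_edgeLe (k := 1) h1 ⟨le_rfl, Fin.le_def.2 (by dsimp only; omega)⟩
      (by dsimp only; omega)

end Support

theorem bracket_coset_cases_general (n : ℕ) (F : Type*) [Field F]
    (lam : Set (Fin n × Fin n)) (hlam : IsNNSP n lam)
    (a : Matrix (Fin n) (Fin n) F)
    (hsupp : ∀ p : Fin n × Fin n, a p.1 p.2 ≠ 0 → p ∈ upGen n lam)
    (j j' : Fin n) (hj : (j' : ℕ) = (j : ℕ) + 1) :
    (∀ i l : Fin n, (i, j) ∈ lam → (j', l) ∈ lam →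
      addSet {z | ∃ x : F, z = (x • Matrix.single j j' (1 : F)) * a -
          a * (x • Matrix.single j j' (1 : F))}
        (utOf n F (upNum n lam 2) : Set (Matrix (Fin n) (Fin n) F)) =
      addSet {z | ∃ x : F, z = x • (a i j • Matrix.single i j' (1 : F) -
          a j' l • Matrix.single j l (1 : F))}
        (utOf n F (upNum n lam 2) : Set (Matrix (Fin n) (Fin n) F))) ∧
    (∀ i : Fin n, (i, j) ∈ lam → (∀ l : Fin n, (j', l) ∉ lam) →
      addSet {z | ∃ x : F, z = (x • Matrix.single j j' (1 : F)) * a -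
          a * (x • Matrix.single j j' (1 : F))}
        (utOf n F (upNum n lam 2) : Set (Matrix (Fin n) (Fin n) F)) =
      addSet {z | ∃ x : F, z = x • (a i j • Matrix.single i j' (1 : F))}
        (utOf n F (upNum n lam 2) : Set (Matrix (Fin n) (Fin n) F))) ∧
    (∀ l : Fin n, (j', l) ∈ lam → (∀ i : Fin n, (i, j) ∉ lam) →
      addSet {z | ∃ x : F, z = (x • Matrix.single j j' (1 : F)) * a -
          a * (x • Matrix.single j j' (1 : F))}
        (utOf n F (upNum n lam 2) : Set (Matrix (Fin n) (Fin n) F)) =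
      addSet {z | ∃ x : F, z = x • (a j' l • Matrix.single j l (1 : F))}
        (utOf n F (upNum n lam 2) : Set (Matrix (Fin n) (Fin n) F))) ∧
    ((∀ i : Fin n, (i, j) ∉ lam) → (∀ l : Fin n, (j', l) ∉ lam) →
      addSet {z | ∃ x : F, z = (x • Matrix.single j j' (1 : F)) * a -
          a * (x • Matrix.single j j' (1 : F))}
        (utOf n F (upNum n lam 2) : Set (Matrix (Fin n) (Fin n) F)) =
      (utOf n F (upNum n lam 2) : Set (Matrix (Fin n) (Fin n) F))) := by
  classical
  obtain ⟨⟨-, hfst, hsnd⟩, -⟩ := hlam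
  set M := utOf n F (upNum n lam 2)
  set R := ∑ q ∈ Finset.univ.filter (fun q => (j', q) ∈ lam), a j' q • single j q (1 : F)
  set C := ∑ p ∈ Finset.univ.filter (fun p => (p, j) ∈ lam), a p j • single p j' (1 : F)
  have hcoset : addSet {z | ∃ x : F, z = (x • single j j' (1 : F)) * a -
      a * (x • single j j' (1 : F))} (M : Set (Matrix (Fin n) (Fin n) F)) = ↑(F ∙ (R - C) ⊔ M) := by
    simp only [smul_mul_assoc, mul_smul_comm, ← smul_sub]
    rw [setOf_eq_smul_eq_span_singleton, addSet_coe_submodule,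
      span_singleton_sup_eq_of_sub_mem (single_mul_sub_mul_single_sub_mem_utOf hsupp hj)]
  have hR : ∀ l, (j', l) ∈ lam → R = a j' l • single j l 1 := fun l hl =>
    sum_univ_filter_eq_of_unique hl fun q hq => (Prod.ext_iff.1 (hfst _ hq _ hl rfl)).2
  have hC : ∀ i, (i, j) ∈ lam → C = a i j • single i j' 1 := fun i hi =>
    sum_univ_filter_eq_of_unique hi fun p hp => (Prod.ext_iff.1 (hsnd _ hp _ hi rfl)).1
  have hR₀ : (∀ l, (j', l) ∉ lam) → R = 0 := fun h =>
    Finset.sum_eq_zero fun q hq => absurd (Finset.mem_filter.1 hq).2 (h q)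
  have hC₀ : (∀ i, (i, j) ∉ lam) → C = 0 := fun h =>
    Finset.sum_eq_zero fun p hp => absurd (Finset.mem_filter.1 hp).2 (h p)
  refine ⟨fun i l hi hl => ?_, fun i hi hl => ?_, fun l hl hi => ?_, fun hi hl => ?_⟩ <;>
    rw [hcoset]
  · rw [hR l hl, hC i hi, setOf_eq_smul_eq_span_singleton, addSet_coe_submodule,
      ← span_singleton_neg_eq, neg_sub]
  · rw [hR₀ hl, hC i hi, setOf_eq_smul_eq_span_singleton, addSet_coe_submodule, zero_sub,
      span_singleton_neg_eq]
  · rw [hR l hl, hC₀ hi, setOf_eq_smul_eq_span_singleton, addSet_coe_submodule, sub_zero]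
  · rw [hR₀ hl, hC₀ hi, sub_zero, Submodule.span_zero_singleton, bot_sup_eq]

/-- Lemma on `[F_q e_{j,j+1}, a] + ut_{↑²λ}` for `a` supported on `↑λ`, `λ` nonnesting:
the four-case description of this coset. -/
theorem bracket_coset_cases (n : ℕ) (F : Type*) [Field F] [Fintype F]
    (lam : Set (Fin n × Fin n)) (hlam : IsNNSP n lam)
    (a : Matrix (Fin n) (Fin n) F) (ha : a ∈ utset n F)
    (hsupp : ∀ p : Fin n × Fin n, a p.1 p.2 ≠ 0 → p ∈ upGen n lam)
    (j j' : Fin n) (hj : (j' : ℕ) = (j : ℕ) + 1) :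
    (∀ i l : Fin n, (i, j) ∈ lam → (j', l) ∈ lam →
      addSet {z | ∃ x : F, z = (x • Matrix.single j j' (1 : F)) * a -
          a * (x • Matrix.single j j' (1 : F))}
        (utOf n F (upNum n lam 2) : Set (Matrix (Fin n) (Fin n) F)) =
      addSet {z | ∃ x : F, z = x • (a i j • Matrix.single i j' (1 : F) -
          a j' l • Matrix.single j l (1 : F))}
        (utOf n F (upNum n lam 2) : Set (Matrix (Fin n) (Fin n) F))) ∧
    (∀ i : Fin n, (i, j) ∈ lam → (∀ l : Fin n, (j', l) ∉ lam) →
      addSet {z | ∃ x : F, z = (x • Matrix.single j j' (1 : F)) * a -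
          a * (x • Matrix.single j j' (1 : F))}
        (utOf n F (upNum n lam 2) : Set (Matrix (Fin n) (Fin n) F)) =
      addSet {z | ∃ x : F, z = x • (a i j • Matrix.single i j' (1 : F))}
        (utOf n F (upNum n lam 2) : Set (Matrix (Fin n) (Fin n) F))) ∧
    (∀ l : Fin n, (j', l) ∈ lam → (∀ i : Fin n, (i, j) ∉ lam) →
      addSet {z | ∃ x : F, z = (x • Matrix.single j j' (1 : F)) * a -
          a * (x • Matrix.single j j' (1 : F))}
        (utOf n F (upNum n lam 2) : Set (Matrix (Fin n) (Fin n) F)) =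
      addSet {z | ∃ x : F, z = x • (a j' l • Matrix.single j l (1 : F))}
        (utOf n F (upNum n lam 2) : Set (Matrix (Fin n) (Fin n) F))) ∧
    ((∀ i : Fin n, (i, j) ∉ lam) → (∀ l : Fin n, (j', l) ∉ lam) →
      addSet {z | ∃ x : F, z = (x • Matrix.single j j' (1 : F)) * a -
          a * (x • Matrix.single j j' (1 : F))}
        (utOf n F (upNum n lam 2) : Set (Matrix (Fin n) (Fin n) F)) =
      (utOf n F (upNum n lam 2) : Set (Matrix (Fin n) (Fin n) F))) :=
  bracket_coset_cases_general n F lam hlam a hsupp j j' hj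

end Paper
end

section
/- Let S = λ ⊔ ν be a splice of a set partition λ of [n], and let R be a row of S (an equivalence class of vertical edges under the relation generated by bindings). Let I and K be the connected components of the graph of λ containing the upper endpoints {i : (i,k) ∈ R} and the lower endpoints {k : (i,k) ∈ R}, respectively. Then I ≠ K; moreover if λ is nonnesting, then every vertical edge (i,k) ∈ ν with i ∈ I or k ∈ K belongs to R. -/
open Matrix BigOperators

namespace Paper

variable (n : ℕ) (F : Type*) [Field F]

/-!
Because `λ` is a set partition, every vertex has at most one `λ`-edge to its right and one to
its left, so the components of the graph of `λ` are chains and two connected vertices are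
comparable under forward reachability. Axiom (S2) moves a vertical edge `(i,k)` along a
`λ`-edge `(i,j)` with `j < k` to the vertical edge `(j,l)`, where `(k,l) ∈ λ`, and the two are
bound; symmetrically for `λ`-edges entering `k`. A forward path from `i` to `k` could be pushed
along like this forever, with ever larger upper endpoints. When `λ` is nonnesting, the `λ`-edge
leaving `i` and the one entering `k` end strictly between `i` and `k`, so the move applies along
every forward path and never leaves the row.
-/

theorem reflTransGen_or_of_symmClosure {α : Type*} {r : α → α → Prop} {a b : α}
    (hl : Relator.LeftUnique r) (hr : Relator.RightUnique r)
    (h : Relation.ReflTransGen (fun x y => r x y ∨ r y x) a b) :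
    Relation.ReflTransGen r a b ∨ Relation.ReflTransGen r b a := by
  induction h with
  | refl => exact .inl .refl
  | @tail b c _ hbc ih =>
    rcases hbc with hbc | hcb <;> rcases ih with hab | hba
    · exact .inl (hab.tail hbc)
    · exact hba.total_of_right_unique hr (.single hbc)
    · have hr' : Relator.RightUnique (Function.swap r) := fun _ _ _ h h' => hl h h'
      simpa only [Relation.reflTransGen_swap] using
        ((Relation.reflTransGen_swap.mpr hab).total_of_right_unique hr' (.single hcb)).symm
    · exact .inr (hba.head hcb)

section Splice

variable {n : ℕ} {lam nu : Set (Fin n × Fin n)}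

def Reach (lam : Set (Fin n × Fin n)) : Fin n → Fin n → Prop :=
  Relation.ReflTransGen (fun x y => (x, y) ∈ lam)

theorem IsEdgeSet.le_of_reach (hlam : IsEdgeSet n lam) {x y : Fin n} (h : Reach lam x y) :
    x ≤ y := by
  induction h with
  | refl => exact le_rfl
  | tail _ hyz ih => exact ih.trans (hlam _ hyz).le

theorem IsSetPartitionE.reach_or_reach_of_conn (hlam : IsSetPartitionE n lam) {x y : Fin n}
    (h : conn n lam x y) : Reach lam x y ∨ Reach lam y x :=
  reflTransGen_or_of_symmClosure
    (fun _ _ _ h h' => congrArg Prod.fst (hlam.2.2 _ h _ h' rfl))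
    (fun _ _ _ h h' => congrArg Prod.snd (hlam.2.1 _ h _ h' rfl)) h

theorem IsSplice.exists_binding_right (hsp : IsSplice n lam nu) {i j k : Fin n}
    (hik : (i, k) ∈ nu) (hij : (i, j) ∈ lam) (hjk : j < k) :
    ∃ l, (k, l) ∈ lam ∧ (j, l) ∈ nu ∧ rowRel n lam nu (i, k) (j, l) := by
  obtain ⟨l, hkl, hjl⟩ := (hsp.2.2.2.2 j k hjk).mp ⟨i, hik, hij⟩
  exact ⟨l, hkl, hjl, (i, j, k, l), ⟨hij, hkl, hik, hjl, hjk⟩, .inl ⟨rfl, rfl⟩⟩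

theorem IsSplice.exists_binding_left (hsp : IsSplice n lam nu) {i j k : Fin n}
    (hik : (i, k) ∈ nu) (hjk : (j, k) ∈ lam) (hij : i < j) :
    ∃ g, (g, i) ∈ lam ∧ (g, j) ∈ nu ∧ rowRel n lam nu (g, j) (i, k) := by
  obtain ⟨g, hgj, hgi⟩ := (hsp.2.2.2.2 i j hij).mpr ⟨k, hjk, hik⟩
  exact ⟨g, hgi, hgj, (g, i, j, k), ⟨hgi, hjk, hgj, hik, hij⟩, .inl ⟨rfl, rfl⟩⟩

theorem IsSplice.not_reach (hsp : IsSplice n lam nu) {i k : Fin n} (hik : (i, k) ∈ nu) :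
    ¬ Reach lam i k := by
  induction i using WellFoundedGT.induction generalizing k with
  | _ i ih =>
    intro hreach
    obtain rfl | ⟨j, hij, hjk⟩ := hreach.cases_head
    · exact (hsp.2.1.1 _ hik).false
    have hjk_ne : j ≠ k := by
      rintro rfl
      exact Set.disjoint_left.mp hsp.2.2.1 hij hik
    obtain ⟨l, hkl, hjl, -⟩ :=
      hsp.exists_binding_right hik hij (lt_of_le_of_ne (hsp.1.1.le_of_reach hjk) hjk_ne)
    exact ih j (hsp.1.1 _ hij) hjl (hjk.tail hkl)

theorem IsSplice.lt_of_mem_lam_right (hsp : IsSplice n lam nu) (hnn : IsNNSP n lam)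
    {i j k : Fin n} (hik : (i, k) ∈ nu) (hij : (i, j) ∈ lam) : j < k := by
  by_contra! hkj
  obtain ⟨m, him, hmk, him_mem | hmk_mem⟩ := hsp.2.2.2.1 _ hik
  · have hmj : m = j := congrArg Prod.snd (hsp.1.2.1 _ him_mem _ hij rfl)
    exact (hmk.trans_le hkj).ne hmj
  · have hmi : m = i := congrArg Prod.fst (hnn.2 _ hmk_mem _ hij ⟨him.le, hkj⟩)
    exact him.ne' hmi

theorem IsSplice.lt_of_mem_lam_left (hsp : IsSplice n lam nu) (hnn : IsNNSP n lam)
    {i j k : Fin n} (hik : (i, k) ∈ nu) (hjk : (j, k) ∈ lam) : i < j := by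
  by_contra! hji
  obtain ⟨m, him, hmk, him_mem | hmk_mem⟩ := hsp.2.2.2.1 _ hik
  · have hmk_eq : m = k := congrArg Prod.snd (hnn.2 _ him_mem _ hjk ⟨hji, hmk.le⟩)
    exact hmk.ne hmk_eq
  · have hmj : m = j := congrArg Prod.fst (hsp.1.2.2 _ hmk_mem _ hjk rfl)
    exact (hji.trans_lt him).ne' hmj

instance : Std.Symm (rowRel n lam nu) :=
  ⟨fun _ _ ⟨b, hb, hpq⟩ => ⟨b, hb, hpq.symm⟩⟩

theorem IsSplice.row_of_reach_fst (hsp : IsSplice n lam nu) (hnn : IsNNSP n lam)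
    {i k i' k' : Fin n} (hik : (i, k) ∈ nu) (hik' : (i', k') ∈ nu) (h : Reach lam i i') :
    Relation.ReflTransGen (rowRel n lam nu) (i, k) (i', k') := by
  induction h using Relation.ReflTransGen.head_induction_on generalizing k with
  | refl => rw [hsp.2.1.2.1 _ hik _ hik' rfl]
  | head hij _ ih =>
    obtain ⟨l, -, hjl, hbind⟩ :=
      hsp.exists_binding_right hik hij (hsp.lt_of_mem_lam_right hnn hik hij)
    exact .head hbind (ih hjl)

theorem IsSplice.row_of_reach_snd (hsp : IsSplice n lam nu) (hnn : IsNNSP n lam)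
    {i k i' k' : Fin n} (hik : (i, k) ∈ nu) (hik' : (i', k') ∈ nu) (h : Reach lam k k') :
    Relation.ReflTransGen (rowRel n lam nu) (i, k) (i', k') := by
  induction h generalizing i' with
  | refl => rw [hsp.2.1.2.2 _ hik _ hik' rfl]
  | tail _ hjk' ih =>
    obtain ⟨g, -, hgj, hbind⟩ :=
      hsp.exists_binding_left hik' hjk' (hsp.lt_of_mem_lam_left hnn hik' hjk')
    exact .tail (ih hgj) hbind

end Splice

/-- For a splice `S = λ ⊔ ν` and a row `R` (the row equivalence class of `p₀ ∈ ν`):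
the components of the graph of `λ` containing the upper and lower endpoints of `R` are
distinct, and if `λ` is nonnesting, every vertical edge with an endpoint in one of these
components belongs to `R`. -/
theorem row_components (n : ℕ) (lam nu : Set (Fin n × Fin n)) (hsp : IsSplice n lam nu)
    (p₀ : Fin n × Fin n) (hp₀ : p₀ ∈ nu) :
    ¬ conn n lam p₀.1 p₀.2 ∧
    (IsNNSP n lam → ∀ q ∈ nu, (conn n lam q.1 p₀.1 ∨ conn n lam q.2 p₀.2) →
      Relation.ReflTransGen (rowRel n lam nu) p₀ q) := by
  obtain ⟨i, k⟩ := p₀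
  refine ⟨fun hconn => ?_, fun hnn q hq hconn => ?_⟩
  · rcases hsp.1.reach_or_reach_of_conn hconn with hik | hki
    · exact hsp.not_reach hp₀ hik
    · exact (hsp.2.1.1 _ hp₀).not_ge (hsp.1.1.le_of_reach hki)
  obtain ⟨i', k'⟩ := q
  rcases hconn with hconn | hconn <;>
    rcases hsp.1.reach_or_reach_of_conn hconn with hreach | hreach
  · exact Std.Symm.symm _ _ (hsp.row_of_reach_fst hnn hq hp₀ hreach)
  · exact hsp.row_of_reach_fst hnn hp₀ hq hreach
  · exact Std.Symm.symm _ _ (hsp.row_of_reach_snd hnn hq hp₀ hreach)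
  · exact hsp.row_of_reach_snd hnn hp₀ hq hreach

end Paper
end

section
/- Let λ be a nonnesting set partition of [n] and let S = λ ⊔ ν be a tight splice of λ (i.e., a splice with S ∩ ↑²λ = ∅). Then ν is also a nonnesting set partition of [n]. -/
open Matrix BigOperators

namespace Paper

variable (n : ℕ) (F : Type*) [Field F]

/-! Every `ν`-edge lies above a `λ`-edge by (S1). Two nested distinct `ν`-edges share no endpoint,
since `ν` is a set partition, so the outer one lies at least two steps above that `λ`-edge, i.e. in
`↑²λ`, which a tight splice avoids. -/

variable {n}

theorem IsSetPartitionE.lt_and_lt_of_edgeLe {s : Set (Fin n × Fin n)} (hs : IsSetPartitionE n s)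
    {p q : Fin n × Fin n} (hp : p ∈ s) (hq : q ∈ s) (hle : edgeLe n p q) (hne : p ≠ q) :
    q.1 < p.1 ∧ p.2 < q.2 :=
  ⟨hle.1.lt_of_ne fun h => hne (hs.2.1 p hp q hq h.symm),
    hle.2.lt_of_ne fun h => hne (hs.2.2 p hp q hq h)⟩

theorem IsSplice.subset_upGen {lam nu : Set (Fin n × Fin n)} (h : IsSplice n lam nu) :
    nu ⊆ upGen n lam := by
  intro q hq
  obtain ⟨j, hj₁, hj₂, hlam | hlam⟩ := h.2.2.2.1 q hq
  · exact ⟨hj₁.trans hj₂, _, hlam, le_rfl, hj₂.le⟩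
  · exact ⟨hj₁.trans hj₂, _, hlam, hj₁.le, le_rfl⟩

theorem mem_upNum_two_of_lt_of_lt {lam : Set (Fin n × Fin n)} {q r : Fin n × Fin n}
    (hq : q ∈ upGen n lam) (h₁ : r.1 < q.1) (h₂ : q.2 < r.2) : r ∈ upNum n lam 2 := by
  obtain ⟨hq_lt, p, hp, hpq₁, hpq₂⟩ := hq
  refine ⟨h₁.trans (hq_lt.trans h₂), p, hp, ⟨(h₁.trans_le hpq₁).le, hpq₂.trans h₂.le⟩, ?_⟩
  have : (r.1 : ℕ) < q.1 := h₁
  have : (q.1 : ℕ) ≤ p.1 := hpq₁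
  have : (p.2 : ℕ) ≤ q.2 := hpq₂
  have : (q.2 : ℕ) < r.2 := h₂
  omega

theorem tight_splice_vertical_nonnesting_general (n : ℕ) (lam nu : Set (Fin n × Fin n))
    (h : IsTightSplice n lam nu) : IsNNSP n nu := by
  obtain ⟨hsplice, htight⟩ := h
  have hnu : IsSetPartitionE n nu := hsplice.2.1
  refine ⟨hnu, fun p hp q hq hle => by_contra fun hne => ?_⟩
  obtain ⟨h₁, h₂⟩ := hnu.lt_and_lt_of_edgeLe hp hq hle hne
  have hq_up : q ∈ upNum n lam 2 := mem_upNum_two_of_lt_of_lt (hsplice.subset_upGen hp) h₁ h₂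
  exact Set.eq_empty_iff_forall_notMem.mp htight q ⟨Or.inr hq, hq_up⟩

/-- If `S = λ ⊔ ν` is a tight splice of a nonnesting set partition `λ`, then `ν` is also a
nonnesting set partition. -/
theorem tight_splice_vertical_nonnesting (n : ℕ) (lam nu : Set (Fin n × Fin n))
    (hlam : IsNNSP n lam) (h : IsTightSplice n lam nu) : IsNNSP n nu :=
  tight_splice_vertical_nonnesting_general n lam nu h

end Paper
end

section
/- For a nonnesting set partition λ of [n], the union of any collection of tight splices of λ is again a tight splice of λ. Consequently, the set of tight splices of λ has a maximum element K, and the tight splices of λ are exactly the sets λ ⊔ ν where ν is a union of rows of K. -/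
open Matrix BigOperators

namespace Paper

variable (n : ℕ) (F : Type*) [Field F]

/-!
Tightness forces every arc of a tight splice to lie exactly one level above an arc of `λ`, so
an arc of one tight splice can never lie strictly above an arc of another; in particular two
such arcs sharing an endpoint coincide. Hence a union of tight splices is again a set
partition, and the remaining axioms are visibly stable under unions. For the rows: since `λ` is
a set partition, (S2) says exactly that a splice contains `(i,k)` iff it contains `(j,l)` for
every binding `(i,j,k,l)`, so the tight splices are the row-closed subsets of the maximum one.
-/

section Splices

variable {n}

lemma IsSetPartitionE.mono {s t : Set (Fin n × Fin n)} (ht : IsSetPartitionE n t) (hst : s ⊆ t) :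
    IsSetPartitionE n s :=
  ⟨fun p hp => ht.1 p (hst hp), fun p hp q hq => ht.2.1 p (hst hp) q (hst hq),
    fun p hp q hq => ht.2.2 p (hst hp) q (hst hq)⟩

lemma IsNNSP.notMem_upNum_two {lam : Set (Fin n × Fin n)} (hlam : IsNNSP n lam)
    {p : Fin n × Fin n} (hp : p ∈ lam) : p ∉ upNum n lam 2 := by
  rintro ⟨-, q, hq, hqp, hlen⟩
  rw [hlam.2 q hq p hp hqp] at hlen
  omega

lemma IsTightSplice.notMem_upNum {lam nu : Set (Fin n × Fin n)} (h : IsTightSplice n lam nu)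
    {p : Fin n × Fin n} (hp : p ∈ nu) : p ∉ upNum n lam 2 :=
  fun hup => h.2.subset ⟨Or.inr hp, hup⟩

lemma IsTightSplice.exists_covered {lam nu : Set (Fin n × Fin n)} (h : IsTightSplice n lam nu)
    {p : Fin n × Fin n} (hp : p ∈ nu) :
    ∃ q ∈ lam, edgeLe n q p ∧ (p.2 : ℕ) - p.1 = (q.2 - q.1 : ℕ) + 1 := by
  obtain ⟨j, hpj, hjp, hq⟩ := h.1.2.2.2.1 p hp
  have hpj' : (p.1 : ℕ) < j := hpj
  have hjp' : (j : ℕ) < p.2 := hjp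
  have hnot := h.notMem_upNum hp
  rcases hq with hq | hq
  · refine ⟨(p.1, j), hq, ⟨le_rfl, hjp.le⟩, ?_⟩
    have : ¬ (j - p.1 : ℕ) + 2 ≤ p.2 - p.1 := fun hlen =>
      hnot ⟨hpj.trans hjp, _, hq, ⟨le_rfl, hjp.le⟩, hlen⟩
    dsimp only
    omega
  · refine ⟨(j, p.2), hq, ⟨hpj.le, le_rfl⟩, ?_⟩
    have : ¬ (p.2 - j : ℕ) + 2 ≤ p.2 - p.1 := fun hlen =>
      hnot ⟨hpj.trans hjp, _, hq, ⟨hpj.le, le_rfl⟩, hlen⟩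
    dsimp only
    omega

/-- Anything strictly above an arc of a tight splice lies in `↑²λ`. -/
lemma IsTightSplice.eq_of_edgeLe {lam nu nu' : Set (Fin n × Fin n)}
    (h : IsTightSplice n lam nu) (h' : IsTightSplice n lam nu')
    {p q : Fin n × Fin n} (hp : p ∈ nu) (hq : q ∈ nu') (hpq : edgeLe n p q) : p = q := by
  by_contra hne
  obtain ⟨r, hr, hrp, hlen⟩ := h.exists_covered hp
  have hstrict : (q.1 : ℕ) < p.1 ∨ (p.2 : ℕ) < q.2 := by
    by_contra! hcon
    exact hne (Prod.ext (Fin.le_antisymm hcon.1 hpq.1) (Fin.le_antisymm hpq.2 hcon.2))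
  have hqp₁ : (q.1 : ℕ) ≤ p.1 := hpq.1
  have hpq₂ : (p.2 : ℕ) ≤ q.2 := hpq.2
  have hpr₁ : (p.1 : ℕ) ≤ r.1 := hrp.1
  have hrp₂ : (r.2 : ℕ) ≤ p.2 := hrp.2
  exact h'.notMem_upNum hq ⟨h'.1.2.1.1 q hq, r, hr,
    ⟨hpq.1.trans hrp.1, hrp.2.trans hpq.2⟩, by omega⟩

lemma IsTightSplice.eq_of_fst_eq {lam nu nu' : Set (Fin n × Fin n)}
    (h : IsTightSplice n lam nu) (h' : IsTightSplice n lam nu')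
    {p q : Fin n × Fin n} (hp : p ∈ nu) (hq : q ∈ nu') (hpq : p.1 = q.1) : p = q := by
  rcases le_total p.2 q.2 with hle | hle
  · exact h.eq_of_edgeLe h' hp hq ⟨hpq.ge, hle⟩
  · exact (h'.eq_of_edgeLe h hq hp ⟨hpq.le, hle⟩).symm

lemma IsTightSplice.eq_of_snd_eq {lam nu nu' : Set (Fin n × Fin n)}
    (h : IsTightSplice n lam nu) (h' : IsTightSplice n lam nu')
    {p q : Fin n × Fin n} (hp : p ∈ nu) (hq : q ∈ nu') (hpq : p.2 = q.2) : p = q := by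
  rcases le_total q.1 p.1 with hle | hle
  · exact h.eq_of_edgeLe h' hp hq ⟨hle, hpq.le⟩
  · exact (h'.eq_of_edgeLe h hq hp ⟨hle, hpq.ge⟩).symm

lemma isSetPartitionE_sUnion_of_isTightSplice {lam : Set (Fin n × Fin n)}
    {c : Set (Set (Fin n × Fin n))} (hc : ∀ nu ∈ c, IsTightSplice n lam nu) :
    IsSetPartitionE n (⋃₀ c) := by
  refine ⟨?_, ?_, ?_⟩
  · rintro p ⟨nu, hnu, hp⟩
    exact (hc nu hnu).1.2.1.1 p hp
  · rintro p ⟨nu, hnu, hp⟩ q ⟨nu', hnu', hq⟩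
    exact (hc nu hnu).eq_of_fst_eq (hc nu' hnu') hp hq
  · rintro p ⟨nu, hnu, hp⟩ q ⟨nu', hnu', hq⟩
    exact (hc nu hnu).eq_of_snd_eq (hc nu' hnu') hp hq

lemma isSplice_sUnion {lam : Set (Fin n × Fin n)} {c : Set (Set (Fin n × Fin n))}
    (hlam : IsSetPartitionE n lam) (hc : ∀ nu ∈ c, IsSplice n lam nu)
    (hpart : IsSetPartitionE n (⋃₀ c)) : IsSplice n lam (⋃₀ c) := by
  refine ⟨hlam, hpart, Set.disjoint_sUnion_right.2 fun nu hnu => (hc nu hnu).2.2.1, ?_, ?_⟩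
  · rintro p ⟨nu, hnu, hp⟩
    exact (hc nu hnu).2.2.2.1 p hp
  · intro j k hjk
    constructor
    · rintro ⟨i, ⟨nu, hnu, hik⟩, hij⟩
      obtain ⟨l, hkl, hjl⟩ := ((hc nu hnu).2.2.2.2 j k hjk).1 ⟨i, hik, hij⟩
      exact ⟨l, hkl, nu, hnu, hjl⟩
    · rintro ⟨l, hkl, nu, hnu, hjl⟩
      obtain ⟨i, hik, hij⟩ := ((hc nu hnu).2.2.2.2 j k hjk).2 ⟨l, hkl, hjl⟩
      exact ⟨i, ⟨nu, hnu, hik⟩, hij⟩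

lemma IsTightSplice.sUnion {lam : Set (Fin n × Fin n)} {c : Set (Set (Fin n × Fin n))}
    (hlam : IsNNSP n lam) (hc : ∀ nu ∈ c, IsTightSplice n lam nu) :
    IsTightSplice n lam (⋃₀ c) := by
  refine ⟨isSplice_sUnion hlam.1 (fun nu hnu => (hc nu hnu).1)
    (isSetPartitionE_sUnion_of_isTightSplice hc), Set.eq_empty_iff_forall_notMem.2 ?_⟩
  rintro p ⟨hp | ⟨nu, hnu, hp⟩, hup⟩
  · exact hlam.notMem_upNum_two hp hup
  · exact (hc nu hnu).notMem_upNum hp hup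

lemma IsSplice.mem_of_rowRel {lam nu nu' : Set (Fin n × Fin n)} (h : IsSplice n lam nu)
    {p q : Fin n × Fin n} (hp : p ∈ nu) (hpq : rowRel n lam nu' p q) : q ∈ nu := by
  obtain ⟨⟨i, j, k, l⟩, ⟨hij, hkl, -, -, hjk⟩, ⟨rfl, rfl⟩ | ⟨rfl, rfl⟩⟩ := hpq
  · obtain ⟨l', hkl', hjl'⟩ := (h.2.2.2.2 j k hjk).1 ⟨i, hp, hij⟩
    cases h.1.2.1 _ hkl _ hkl' rfl
    exact hjl'
  · obtain ⟨i', hik', hij'⟩ := (h.2.2.2.2 j k hjk).2 ⟨l, hkl, hp⟩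
    cases h.1.2.2 _ hij _ hij' rfl
    exact hik'

lemma IsSplice.mem_of_reflTransGen_rowRel {lam nu nu' : Set (Fin n × Fin n)}
    (h : IsSplice n lam nu) {p q : Fin n × Fin n} (hp : p ∈ nu)
    (hpq : Relation.ReflTransGen (rowRel n lam nu') p q) : q ∈ nu := by
  induction hpq with
  | refl => exact hp
  | tail _ hstep ih => exact h.mem_of_rowRel ih hstep

lemma IsSplice.of_subset_of_rowRel_closed {lam nu nuK : Set (Fin n × Fin n)}
    (hK : IsSplice n lam nuK) (hsub : nu ⊆ nuK)
    (hclosed : ∀ p ∈ nu, ∀ q ∈ nuK, rowRel n lam nuK p q → q ∈ nu) : IsSplice n lam nu := by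
  refine ⟨hK.1, hK.2.1.mono hsub, hK.2.2.1.mono_right hsub,
    fun p hp => hK.2.2.2.1 p (hsub hp), fun j k hjk => ⟨?_, ?_⟩⟩
  · rintro ⟨i, hik, hij⟩
    obtain ⟨l, hkl, hjl⟩ := (hK.2.2.2.2 j k hjk).1 ⟨i, hsub hik, hij⟩
    exact ⟨l, hkl, hclosed _ hik _ hjl
      ⟨(i, j, k, l), ⟨hij, hkl, hsub hik, hjl, hjk⟩, .inl ⟨rfl, rfl⟩⟩⟩
  · rintro ⟨l, hkl, hjl⟩
    obtain ⟨i, hik, hij⟩ := (hK.2.2.2.2 j k hjk).2 ⟨l, hkl, hsub hjl⟩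
    exact ⟨i, hclosed _ hjl _ hik
      ⟨(i, j, k, l), ⟨hij, hkl, hik, hsub hjl, hjk⟩, .inr ⟨rfl, rfl⟩⟩, hij⟩

lemma IsTightSplice.of_subset_of_rowRel_closed {lam nu nuK : Set (Fin n × Fin n)}
    (hK : IsTightSplice n lam nuK) (hsub : nu ⊆ nuK)
    (hclosed : ∀ p ∈ nu, ∀ q ∈ nuK, rowRel n lam nuK p q → q ∈ nu) :
    IsTightSplice n lam nu :=
  ⟨hK.1.of_subset_of_rowRel_closed hsub hclosed,
    Set.subset_eq_empty (Set.inter_subset_inter_left _ (Set.union_subset_union_right lam hsub))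
      hK.2⟩

end Splices

/-- Unions of tight splices of a nonnesting set partition `λ` are tight splices; hence
there is a maximum tight splice `K` of `λ`, and the tight splices of `λ` are exactly the
sets `λ ⊔ ν` with `ν` a union of rows of `K` (i.e. `ν ⊆ νK` closed under the row
equivalence of `K`). -/
theorem tight_splices_union_and_maximum (n : ℕ) (lam : Set (Fin n × Fin n))
    (hlam : IsNNSP n lam) :
    (∀ c : Set (Set (Fin n × Fin n)), (∀ nu ∈ c, IsTightSplice n lam nu) →
      IsTightSplice n lam (⋃₀ c)) ∧
    (∃ nuK : Set (Fin n × Fin n), IsTightSplice n lam nuK ∧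
      (∀ nu : Set (Fin n × Fin n), IsTightSplice n lam nu → nu ⊆ nuK) ∧
      (∀ nu : Set (Fin n × Fin n), IsTightSplice n lam nu ↔
        (nu ⊆ nuK ∧ ∀ p ∈ nu, ∀ q ∈ nuK,
          Relation.ReflTransGen (rowRel n lam nuK) p q → q ∈ nu))) := by
  have hK : IsTightSplice n lam (⋃₀ {nu | IsTightSplice n lam nu}) :=
    IsTightSplice.sUnion hlam fun _ h => h
  refine ⟨fun c hc => IsTightSplice.sUnion hlam hc, _, hK,
    fun nu h => Set.subset_sUnion_of_mem h, fun nu => ⟨fun h => ?_, fun ⟨hsub, hclosed⟩ => ?_⟩⟩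
  · exact ⟨Set.subset_sUnion_of_mem h,
      fun p hp q _ hpq => h.1.mem_of_reflTransGen_rowRel hp hpq⟩
  · exact hK.of_subset_of_rowRel_closed hsub
      fun p hp q hq hpq => hclosed p hp q hq (.single hpq)

end Paper
end

section
/- Let K be a totally ordered finite set. There is a bijection between loopless binary matroids on ground set K and unidirectional bipartite graphs (U, V, E) with U ⊔ V = K, E ⊆ U × V, every vertex of V incident to at least one edge, and u < v for every edge (u,v) ∈ E. The bijection sends the matroid with lexicographically minimal basis A and exchange data {E_b : b ∉ A} to the graph (A, K \ A, {(a,b) : b ∉ A, a ∈ E_b}). -/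
/-!
Written in the coordinates of a base `A`, an `F₂`-representation becomes `[I | C]`, and since `1`
is the only nonzero scalar, the column of `b ∉ A` is the indicator of `E_b`: the exchange graph
determines the matroid. Conversely, in the standard representation of an increasing bipartite
graph `(U, Uᶜ, E)`, any base lexicographically before `U` would contain a first `x ∉ U`, whose
vector is the sum of the vectors of its (earlier) neighbours `u ∈ U`; so `U` is the lex-minimal
base, and `E` is its exchange graph.
-/

open Matrix BigOperators

namespace Paper

variable (n : ℕ) (F : Type*) [Field F]

/-- A collection of bases of a matroid on ground set `K`. -/
def IsMatroidBases (K : Type*) (B : Set (Set K)) : Prop :=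
  B.Nonempty ∧ ∀ A ∈ B, ∀ A' ∈ B, ∀ a ∈ A, a ∉ A' →
    ∃ b ∈ A', b ∉ A ∧ insert b (A \ {a}) ∈ B

/-- The matroid with bases `B` is loopless. -/
def IsLoopless (K : Type*) (B : Set (Set K)) : Prop := ∀ x : K, ∃ A ∈ B, x ∈ A

/-- The matroid with bases `B` is binary: it has an `F₂`-representation. -/
def IsBinaryM (K : Type*) (B : Set (Set K)) : Prop :=
  ∃ (r : ℕ) (φ : K → (Fin r → ZMod 2)), ∀ A : Set K, A ∈ B ↔
    (LinearIndependent (ZMod 2) (fun a : A => φ a) ∧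
      Submodule.span (ZMod 2) (φ '' A) = Submodule.span (ZMod 2) (Set.range φ))

/-- A loopless binary matroid on `K`. -/
def IsLooplessBinaryMatroid (K : Type*) (B : Set (Set K)) : Prop :=
  IsMatroidBases K B ∧ IsLoopless K B ∧ IsBinaryM K B

/-- A unidirectional bipartite graph `(U, V, E)` on `K` with increasing edges. -/
def IsIncreasingUniBipartite (K : Type*) [LinearOrder K]
    (G : Set K × Set K × Set (K × K)) : Prop :=
  G.1 ∪ G.2.1 = Set.univ ∧ Disjoint G.1 G.2.1 ∧
    (∀ e ∈ G.2.2, e.1 ∈ G.1 ∧ e.2 ∈ G.2.1 ∧ e.1 < e.2) ∧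
    ∀ v ∈ G.2.1, ∃ u : K, (u, v) ∈ G.2.2

/-- `A` is the lexicographically minimal member of `B` (smaller elements being more
significant). -/
def IsLexMin (K : Type*) [LinearOrder K] (A : Set K) (B : Set (Set K)) : Prop :=
  A ∈ B ∧ ∀ A' ∈ B, A' ≠ A →
    ∃ x, x ∈ A ∧ x ∉ A' ∧ ∀ y, y < x → (y ∈ A ↔ y ∈ A')


open Set Submodule Function

section LinearBases

def linearBases {K V : Type*} (F : Type*) [DivisionRing F] [AddCommGroup V] [Module F V]
    (φ : K → V) : Set (Set K) :=
  {X | LinearIndepOn F φ X ∧ span F (φ '' X) = span F (range φ)}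

variable {K F V W : Type*} [DivisionRing F] [AddCommGroup V] [Module F V]
  [AddCommGroup W] [Module F W]

theorem linearBases_comp {j : V →ₗ[F] W} (hj : Injective j) (φ : K → V) :
    linearBases F (j ∘ φ) = linearBases F φ := by
  ext X
  simp only [linearBases, mem_ofPred_eq, image_comp, range_comp, ← map_span,
    (map_injective_of_injective hj).eq_iff, j.linearIndepOn_iff_of_injOn hj.injOn]

theorem linearBases_nonempty (φ : K → V) : (linearBases F φ).Nonempty := by
  obtain ⟨X, -, -, hspan, hX⟩ :=
    exists_linearIndepOn_extension (linearIndepOn_empty F φ) (empty_subset univ)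
  refine ⟨X, hX, le_antisymm (span_mono (image_subset_range φ X)) ?_⟩
  rwa [span_le, ← image_univ]

theorem notMem_span_image_diff_singleton {φ : K → V} {X : Set K} {a : K}
    (hX : LinearIndepOn F φ X) (ha : a ∈ X) : φ a ∉ span F (φ '' (X \ {a})) :=
  (hX.mono sdiff_subset).notMem_span_iff.2
    ⟨by rwa [insert_sdiff_singleton, insert_eq_of_mem ha], fun h => h.2 rfl⟩

theorem insert_diff_singleton_mem_linearBases_iff {φ : K → V} {X : Set K} {a : K}
    (hX : X ∈ linearBases F φ) (ha : a ∈ X) (b : K) :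
    insert b (X \ {a}) ∈ linearBases F φ ↔ φ b ∉ span F (φ '' (X \ {a})) := by
  have hX_image : φ '' X = insert (φ a) (φ '' (X \ {a})) := by
    rw [← image_insert_eq, insert_sdiff_singleton, insert_eq_of_mem ha]
  constructor
  · rintro ⟨-, hspan⟩ hb
    rw [image_insert_eq, span_insert_eq_span hb] at hspan
    exact notMem_span_image_diff_singleton hX.1 ha (hspan ▸ subset_span (mem_range_self a))
  · intro hb
    refine ⟨(hX.1.mono sdiff_subset).insert hb,
      le_antisymm (span_mono (image_subset_range _ _)) ?_⟩
    have hbX : φ b ∈ span F (insert (φ a) (φ '' (X \ {a}))) :=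
      hX_image ▸ hX.2 ▸ subset_span (mem_range_self b)
    rw [← hX.2, hX_image, image_insert_eq, span_le, insert_subset_iff]
    exact ⟨mem_span_insert_exchange hbX hb, subset_span.trans (span_mono (subset_insert _ _))⟩

theorem exists_insert_diff_singleton_mem_linearBases {φ : K → V} {X X' : Set K} {a : K}
    (hX : X ∈ linearBases F φ) (hX' : X' ∈ linearBases F φ) (ha : a ∈ X) (ha' : a ∉ X') :
    ∃ b ∈ X', b ∉ X ∧ insert b (X \ {a}) ∈ linearBases F φ := by
  have hφa := notMem_span_image_diff_singleton hX.1 ha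
  obtain ⟨b, hbX', hb⟩ : ∃ b ∈ X', φ b ∉ span F (φ '' (X \ {a})) := by
    by_contra! h
    have : span F (range φ) ≤ span F (φ '' (X \ {a})) :=
      hX'.2 ▸ span_le.2 (image_subset_iff.2 h)
    exact hφa (this (subset_span (mem_range_self a)))
  refine ⟨b, hbX', fun hbX => hb (subset_span (mem_image_of_mem φ ⟨hbX, ?_⟩)),
    (insert_diff_singleton_mem_linearBases_iff hX ha b).2 hb⟩
  rintro rfl
  exact ha' hbX'

theorem isMatroidBases_linearBases (φ : K → V) : IsMatroidBases K (linearBases F φ) :=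
  ⟨linearBases_nonempty φ, fun _ hX _ hX' _ ha ha' =>
    exists_insert_diff_singleton_mem_linearBases hX hX' ha ha'⟩

theorem isBinaryM_iff {B : Set (Set K)} :
    IsBinaryM K B ↔ ∃ (r : ℕ) (φ : K → Fin r → ZMod 2), B = linearBases (ZMod 2) φ := by
  simp only [IsBinaryM, Set.ext_iff]
  rfl

theorem isBinaryM_linearBases [Module (ZMod 2) V] [Module.Finite (ZMod 2) V] (φ : K → V) :
    IsBinaryM K (linearBases (ZMod 2) φ) :=
  isBinaryM_iff.2 ⟨_, (Module.finBasis (ZMod 2) V).equivFun ∘ φ,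
    (linearBases_comp (Module.finBasis (ZMod 2) V).equivFun.injective φ).symm⟩

noncomputable def basisOfMemLinearBases {φ : K → V} {A : Set K} (hA : A ∈ linearBases F φ) :
    Module.Basis A F (span F (range φ)) :=
  (Module.Basis.span hA.1.linearIndependent).map
    (LinearEquiv.ofEq _ _ (by rw [← image_eq_range, hA.2]))

theorem coe_basisOfMemLinearBases_apply {φ : K → V} {A : Set K} (hA : A ∈ linearBases F φ)
    (a : A) : (basisOfMemLinearBases hA a : V) = φ a := by
  rw [basisOfMemLinearBases, Module.Basis.map_apply, LinearEquiv.coe_ofEq_apply,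
    Module.Basis.span_apply]

theorem insert_diff_singleton_mem_linearBases_iff_repr {φ : K → V} {A : Set K}
    (b : Module.Basis A F V) (hb : ∀ a, b a = φ a) (a : A) (y : K) :
    insert y (A \ {(a : K)}) ∈ linearBases F φ ↔ b.repr (φ y) a ≠ 0 := by
  have hb' : ⇑b = fun a : A => φ a := funext hb
  have hbA : φ '' A = range b := by rw [image_eq_range, hb']
  have hspan : span F (φ '' A) = ⊤ := by rw [hbA, b.span_eq]
  have hA : A ∈ linearBases F φ :=
    ⟨show LinearIndependent F (fun a : A => φ a) from hb' ▸ b.linearIndependent,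
      hspan.trans (eq_top_iff.2 (hspan ▸ span_mono (image_subset_range _ _))).symm⟩
  have hdiff : φ '' (A \ {(a : K)}) = b '' {a}ᶜ := by
    ext v
    simp only [mem_image, mem_sdiff, mem_singleton_iff, mem_compl_iff, Subtype.exists, hb,
      Subtype.ext_iff]
    exact exists_congr fun x => by tauto
  rw [insert_diff_singleton_mem_linearBases_iff hA a.2, hdiff, b.mem_span_image]
  simp

end LinearBases

section LexOrder

variable {K : Type*}

/-- Since `False < True`, `IsLexMin K A B` says that `lexKey A` is the greatest key in `B`. -/
def lexKey (A : Set K) : Lex (K → Prop) := toLex (· ∈ A)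

theorem lexKey_injective : Injective (lexKey (K := K)) := fun _ _ h =>
  Set.ext fun x => iff_of_eq (congrFun (toLex.injective h) x)

variable [LinearOrder K]

theorem lexKey_lt_lexKey_iff {A A' : Set K} :
    lexKey A' < lexKey A ↔
      ∃ x, x ∈ A ∧ x ∉ A' ∧ ∀ y, y < x → (y ∈ A ↔ y ∈ A') := by
  refine exists_congr fun x => ?_
  simp only [lexKey, Pi.toLex_apply, lt_iff_le_not_ge, le_Prop_eq, eq_iff_iff,
    Classical.not_imp]
  constructor
  · rintro ⟨hagree, -, hxA, hxA'⟩
    exact ⟨hxA, hxA', fun y hy => (hagree y hy).symm⟩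
  · rintro ⟨hxA, hxA', hagree⟩
    exact ⟨fun y hy => (hagree y hy).symm, fun h => absurd h hxA', hxA, hxA'⟩

theorem IsLexMin.lt_of_insert_diff_singleton_mem {A : Set K} {B : Set (Set K)}
    (hA : IsLexMin K A B) {a b : K} (ha : a ∈ A) (hb : b ∉ A) (hab : insert b (A \ {a}) ∈ B) :
    a < b := by
  obtain ⟨x, hxA, hx, hagree⟩ := hA.2 _ hab fun h => hb (h ▸ mem_insert b _)
  obtain rfl : x = a := by_contra fun hxa => hx (mem_insert_of_mem _ ⟨hxA, hxa⟩)
  refine lt_of_le_of_ne (not_lt.1 fun hba => hb ((hagree b hba).2 (mem_insert b _))) ?_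
  rintro rfl
  exact hb hxA

theorem isLexMin_iff {A : Set K} {B : Set (Set K)} :
    IsLexMin K A B ↔ A ∈ B ∧ ∀ A' ∈ B, lexKey A' ≤ lexKey A := by
  refine and_congr_right fun _ => forall₂_congr fun A' _ => ?_
  rw [ne_eq, le_iff_lt_or_eq, lexKey_injective.eq_iff, ← lexKey_lt_lexKey_iff,
    or_iff_not_imp_right]
  exact Iff.rfl

theorem exists_isLexMin [Finite K] {B : Set (Set K)} (hB : B.Nonempty) :
    ∃ A, IsLexMin K A B := by
  obtain ⟨A, hA, hmax⟩ := B.exists_max_image lexKey B.toFinite hB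
  exact ⟨A, isLexMin_iff.2 ⟨hA, hmax⟩⟩

theorem IsLexMin.unique {A A' : Set K} {B : Set (Set K)} (hA : IsLexMin K A B)
    (hA' : IsLexMin K A' B) : A = A' :=
  lexKey_injective <|
    le_antisymm ((isLexMin_iff.1 hA').2 A hA.1) ((isLexMin_iff.1 hA).2 A' hA'.1)

end LexOrder

section GraphRep

open scoped Classical

/-- The standard representation `[I | C]` of a bipartite graph `(U, Uᶜ, E)`, with `C` its
biadjacency matrix. -/
noncomputable def graphRep {K : Type*} (F : Type*) [DivisionRing F] (U : Set K)
    (E : Set (K × K)) (x : K) : K → F :=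
  if x ∈ U then Pi.single x 1 else fun u => if (u, x) ∈ E then 1 else 0

variable {K F : Type*} [DivisionRing F] {U : Set K} {E : Set (K × K)}

theorem graphRep_of_mem {u : K} (hu : u ∈ U) :
    graphRep F U E u = Pi.single u 1 := by
  simp [graphRep, hu]

theorem graphRep_of_notMem {x : K} (hx : x ∉ U) (u : K) :
    graphRep F U E x u = if (u, x) ∈ E then 1 else 0 := by
  simp [graphRep, hx]

theorem graphRep_eq_zero {x : K} (hx : x ∉ U) (hE : ∀ u, (u, x) ∉ E) :
    graphRep F U E x = 0 := by
  ext u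
  simp [graphRep_of_notMem hx, hE u]

theorem graphRep_mem_span [Fintype K] {x : K} {S : Set K} (hx : x ∉ U)
    (hS : ∀ u, (u, x) ∈ E → u ∈ U ∩ S) :
    graphRep F U E x ∈ span F (graphRep F U E '' S) := by
  have hsum : graphRep F U E x = ∑ u with (u, x) ∈ E, Pi.single u 1 := by
    ext v
    simp [graphRep_of_notMem hx, Finset.sum_apply, Pi.single_apply]
  rw [hsum]
  refine sum_mem fun u hu => ?_
  obtain ⟨huU, huS⟩ := hS u (Finset.mem_filter.1 hu).2
  exact graphRep_of_mem (F := F) (E := E) huU ▸ subset_span (mem_image_of_mem _ huS)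

theorem apply_eq_zero_of_mem_span_graphRep {a : K} {f : K → F}
    (hf : f ∈ span F (graphRep F U E '' (U \ {a}))) : f a = 0 := by
  suffices span F (graphRep F U E '' (U \ {a})) ≤ LinearMap.ker (LinearMap.proj a) from this hf
  rw [span_le]
  rintro _ ⟨u, ⟨huU, hua⟩, rfl⟩
  simp [graphRep_of_mem huU, Ne.symm hua]

theorem mem_linearBases_graphRep [Fintype K] (hE : ∀ e ∈ E, e.1 ∈ U) :
    U ∈ linearBases F (graphRep F U E) := by
  refine ⟨(LinearIndependent.linearIndepOn (Pi.linearIndependent_single_one K F) U).congr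
    fun u hu => (graphRep_of_mem hu).symm, le_antisymm (span_mono (image_subset_range _ _)) ?_⟩
  rw [span_le]
  rintro _ ⟨x, rfl⟩
  by_cases hx : x ∈ U
  · exact subset_span (mem_image_of_mem _ hx)
  · exact graphRep_mem_span hx fun u hu => ⟨hE _ hu, hE _ hu⟩

theorem insert_diff_singleton_mem_linearBases_graphRep_iff [Fintype K]
    (hE : ∀ e ∈ E, e.1 ∈ U) {a b : K} (ha : a ∈ U) (hb : b ∉ U) :
    insert b (U \ {a}) ∈ linearBases F (graphRep F U E) ↔ (a, b) ∈ E := by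
  rw [insert_diff_singleton_mem_linearBases_iff (mem_linearBases_graphRep hE) ha, not_iff_comm]
  constructor
  · intro hab
    refine graphRep_mem_span hb fun u hu => ⟨hE _ hu, hE _ hu, ?_⟩
    rintro rfl
    exact hab hu
  · intro hspan hab
    simpa [graphRep_of_notMem hb, hab] using apply_eq_zero_of_mem_span_graphRep hspan

end GraphRep

section Bijection

variable {K : Type*}

def exchangeEdges (A : Set K) (B : Set (Set K)) : Set (K × K) :=
  {e | e.2 ∉ A ∧ e.1 ∈ A ∧ insert e.2 (A \ {e.1}) ∈ B}

def exchangeGraph (A : Set K) (B : Set (Set K)) : Set K × Set K × Set (K × K) :=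
  (A, Aᶜ, exchangeEdges A B)

theorem isLexMin_graphRep [LinearOrder K] [Fintype K] {F : Type*} [DivisionRing F] {U : Set K}
    {E : Set (K × K)} (hE : ∀ e ∈ E, e.1 ∈ U ∧ e.1 < e.2) :
    IsLexMin K U (linearBases F (graphRep F U E)) := by
  refine isLexMin_iff.2 ⟨mem_linearBases_graphRep fun e he => (hE e he).1,
    fun X hX => not_lt.1 fun hlt => ?_⟩
  obtain ⟨x, hxX, hxU, hagree⟩ := lexKey_lt_lexKey_iff.1 hlt
  refine notMem_span_image_diff_singleton hX.1 hxX (graphRep_mem_span hxU fun u hu => ?_)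
  obtain ⟨huU, hux⟩ := hE _ hu
  exact ⟨huU, (hagree u hux).2 huU, hux.ne⟩

theorem exchangeEdges_linearBases_graphRep [Fintype K] {F : Type*} [DivisionRing F] {U : Set K}
    {E : Set (K × K)} (hE : ∀ e ∈ E, e.1 ∈ U ∧ e.2 ∉ U) :
    exchangeEdges U (linearBases F (graphRep F U E)) = E := by
  have hE₁ : ∀ e ∈ E, e.1 ∈ U := fun e he => (hE e he).1
  ext e
  constructor
  · rintro ⟨hb, ha, hab⟩
    exact (insert_diff_singleton_mem_linearBases_graphRep_iff hE₁ ha hb).1 hab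
  · intro he
    obtain ⟨ha, hb⟩ := hE e he
    exact ⟨hb, ha, (insert_diff_singleton_mem_linearBases_graphRep_iff hE₁ ha hb).2 he⟩

theorem isLooplessBinaryMatroid_graphRep [LinearOrder K] [Fintype K] {U : Set K}
    {E : Set (K × K)} (hG : IsIncreasingUniBipartite K (U, Uᶜ, E)) :
    IsLooplessBinaryMatroid K (linearBases (ZMod 2) (graphRep (ZMod 2) U E)) := by
  refine ⟨isMatroidBases_linearBases _, fun x => ?_, isBinaryM_linearBases _⟩
  have hE : ∀ e ∈ E, e.1 ∈ U := fun e he => (hG.2.2.1 e he).1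
  by_cases hx : x ∈ U
  · exact ⟨U, mem_linearBases_graphRep hE, hx⟩
  · obtain ⟨u, hu⟩ := hG.2.2.2 x hx
    exact ⟨_, (insert_diff_singleton_mem_linearBases_graphRep_iff hE (hE _ hu) hx).2 hu,
      mem_insert x _⟩

theorem linearBases_graphRep_exchangeEdges [Fintype K] {V : Type*} [AddCommGroup V]
    [Module (ZMod 2) V] {φ : K → V} {A : Set K} (hA : A ∈ linearBases (ZMod 2) φ) :
    linearBases (ZMod 2) (graphRep (ZMod 2) A (exchangeEdges A (linearBases (ZMod 2) φ))) =
      linearBases (ZMod 2) φ := by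
  classical
  set W := span (ZMod 2) (range φ)
  let φW : K → W := fun x => ⟨φ x, subset_span (mem_range_self x)⟩
  have hφW : linearBases (ZMod 2) φW = linearBases (ZMod 2) φ :=
    (linearBases_comp W.injective_subtype φW).symm
  let b := basisOfMemLinearBases hA
  have hb : ∀ a, b a = φW a := fun a => Subtype.ext (coe_basisOfMemLinearBases_apply hA a)
  let extend : (A →₀ ZMod 2) →ₗ[ZMod 2] K → ZMod 2 :=
    Finsupp.lcoeFun ∘ₗ Finsupp.lmapDomain (ZMod 2) (ZMod 2) Subtype.val
  have hextend : Injective extend :=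
    DFunLike.coe_injective.comp (Finsupp.mapDomain_injective Subtype.val_injective)
  suffices graphRep (ZMod 2) A (exchangeEdges A (linearBases (ZMod 2) φ)) =
      (extend ∘ₗ b.repr.toLinearMap) ∘ φW by
    rw [this, linearBases_comp (by simpa using hextend.comp b.repr.injective), hφW]
  ext x u
  change _ = Finsupp.mapDomain Subtype.val (b.repr (φW x)) u
  by_cases hu : u ∈ A
  swap
  · rw [Finsupp.mapDomain_of_notMem_range _ _ (by simpa using hu)]
    by_cases hx : x ∈ A
    · simp [graphRep_of_mem hx, show u ≠ x by rintro rfl; exact hu hx]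
    · simp [graphRep_of_notMem hx, exchangeEdges, hu]
  lift u to A using hu
  rw [Finsupp.mapDomain_apply Subtype.val_injective]
  by_cases hx : x ∈ A
  · lift x to A using hx
    rw [graphRep_of_mem x.2, ← hb, b.repr_self, Pi.single_apply, Finsupp.single_apply,
      ← Subtype.ext_iff]
    split_ifs <;> simp_all
  · have hmem := insert_diff_singleton_mem_linearBases_iff_repr b hb u x
    rw [hφW] at hmem
    have h01 : ∀ c : ZMod 2, (if c ≠ 0 then 1 else 0) = c := by decide
    simp only [graphRep_of_notMem hx, exchangeEdges, mem_ofPred_eq, u.2, true_and,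
      hx, not_false_eq_true, hmem, h01]

theorem IsBinaryM.linearBases_graphRep_exchangeEdges [Fintype K] {B : Set (Set K)}
    (hB : IsBinaryM K B) {A : Set K} (hA : A ∈ B) :
    linearBases (ZMod 2) (graphRep (ZMod 2) A (exchangeEdges A B)) = B := by
  obtain ⟨r, φ, rfl⟩ := isBinaryM_iff.1 hB
  exact Paper.linearBases_graphRep_exchangeEdges hA

theorem isIncreasingUniBipartite_exchangeGraph [LinearOrder K] [Fintype K] {B : Set (Set K)}
    {A : Set K} (hB : IsLooplessBinaryMatroid K B) (hA : IsLexMin K A B) :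
    IsIncreasingUniBipartite K (exchangeGraph A B) := by
  refine ⟨union_compl_self A, disjoint_compl_right,
    fun e ⟨hb, ha, hab⟩ => ⟨ha, hb, hA.lt_of_insert_diff_singleton_mem ha hb hab⟩,
    fun v hv => ?_⟩
  by_contra! hE
  obtain ⟨X, hX, hvX⟩ := hB.2.1 v
  rw [← hB.2.2.linearBases_graphRep_exchangeEdges hA.1] at hX
  exact hX.1.ne_zero hvX (graphRep_eq_zero hv hE)

theorem IsIncreasingUniBipartite.snd_eq_compl [LinearOrder K]
    {G : Set K × Set K × Set (K × K)} (hG : IsIncreasingUniBipartite K G) : G.2.1 = G.1ᶜ :=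
  eq_compl_iff_isCompl.2 (IsCompl.symm ⟨hG.2.1, codisjoint_iff.2 hG.1⟩)

end Bijection

/-- Loopless binary matroids on a finite totally ordered set `K` are in bijection with
unidirectional bipartite graphs on `K` with increasing edges, the bijection sending the
matroid with lexicographically minimal basis `A` to `(A, K \ A, {(a,b) : b ∉ A, a ∈ E_b})`
where `E_b = {a ∈ A : (A ∪ {b}) \ {a}` is a basis `}`. -/
theorem loopless_binary_matroid_graph_bijection (K : Type*) [LinearOrder K] [Fintype K] :
    ∃ f : {B : Set (Set K) // IsLooplessBinaryMatroid K B} →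
        {G : Set K × Set K × Set (K × K) // IsIncreasingUniBipartite K G},
      Function.Bijective f ∧
      ∀ M : {B : Set (Set K) // IsLooplessBinaryMatroid K B}, ∀ A : Set K,
        IsLexMin K A M.1 →
        (f M : Set K × Set K × Set (K × K)) =
          (A, Aᶜ, {e : K × K | e.2 ∉ A ∧ e.1 ∈ A ∧ insert e.2 (A \ {e.1}) ∈ M.1}) := by
  choose lexMin hlexMin using
    fun M : {B : Set (Set K) // IsLooplessBinaryMatroid K B} => exists_isLexMin M.2.1.1
  refine ⟨fun M => ⟨exchangeGraph (lexMin M) M.1,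
      isIncreasingUniBipartite_exchangeGraph M.2 (hlexMin M)⟩,
    ⟨fun M M' h => ?_, fun ⟨⟨U, V, E⟩, hG⟩ => ?_⟩, fun M A hA => ?_⟩
  · simp only [Subtype.mk.injEq, exchangeGraph, Prod.mk.injEq] at h
    obtain ⟨hA, -, hE⟩ := h
    rw [Subtype.ext_iff, ← M.2.2.2.linearBases_graphRep_exchangeEdges (hlexMin M).1,
      ← M'.2.2.2.linearBases_graphRep_exchangeEdges (hlexMin M').1, hE, hA]
  · obtain rfl : V = Uᶜ := hG.snd_eq_compl
    have hM := isLooplessBinaryMatroid_graphRep hG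
    have hU := (hlexMin ⟨_, hM⟩).unique
      (isLexMin_graphRep fun e he => ⟨(hG.2.2.1 e he).1, (hG.2.2.1 e he).2.2⟩)
    refine ⟨⟨_, hM⟩, Subtype.ext ?_⟩
    simp only [hU, exchangeGraph]
    rw [exchangeEdges_linearBases_graphRep fun e he =>
      ⟨(hG.2.2.1 e he).1, (hG.2.2.1 e he).2.1⟩]
  · obtain rfl := (hlexMin M).unique hA
    rfl

end Paper
end
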